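/- arXiv:1806.01197 — 8 statements merged into one kernel-verified Lean document; each statement's English description precedes it below -/
import Mathlib

section
/- Let $s \geq 1$, $\alpha \in (0, 1/16]$, and $\delta > 0$. Suppose $V = \{v_1, \dots, v_n\} \subset \mathbb{R}^N$ is a $\delta$-separated set with $n \geq 2$ lying within distance $\alpha\delta$ of a line $\ell$, enumerated so that the orthogonal projections $\pi_\ell(v_i)$ are increasing along $\ell$. Then $\sum_{i=1}^{n-1} |v_{i+1} - v_i|^s \leq (1 + 3\alpha^2)^s |v_1 - v_n|^s$. -/
open Metric

lemma norm_add_smul_sq_aux {N : ℕ} (w u : EuclideanSpace ℝ (Fin N)) (hu : ‖u‖ = 1)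
    (h : (inner ℝ w u : ℝ) = 0) (c : ℝ) : ‖w + c • u‖ ^ 2 = ‖w‖ ^ 2 + c ^ 2 := by
  rw [norm_add_sq_real, real_inner_smul_right, h, norm_smul, hu]
  simp [sq_abs]

lemma real_add_rpow_aux (a b p : ℝ) (ha : 0 ≤ a) (hb : 0 ≤ b) (hp : 1 ≤ p) :
    a ^ p + b ^ p ≤ (a + b) ^ p := by
  have h := NNReal.coe_le_coe.mpr (NNReal.add_rpow_le_rpow_add a.toNNReal b.toNNReal hp)
  push_cast at h
  rwa [Real.coe_toNNReal a ha, Real.coe_toNNReal b hb] at h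

lemma sum_rpow_le_rpow_sum_aux (m : ℕ) (f : ℕ → ℝ) (hf : ∀ i < m, 0 ≤ f i) (s : ℝ) (hs : 1 ≤ s) :
    ∑ i ∈ Finset.range m, f i ^ s ≤ (∑ i ∈ Finset.range m, f i) ^ s := by
  induction m with
  | zero => simp [Real.zero_rpow (by linarith : s ≠ 0)]
  | succ m ih =>
    have hf' : ∀ i < m, 0 ≤ f i := fun i hi => hf i (by omega)
    have h1 := ih hf'
    rw [Finset.sum_range_succ, Finset.sum_range_succ]
    calc ∑ i ∈ Finset.range m, f i ^ s + f m ^ s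
        ≤ (∑ i ∈ Finset.range m, f i) ^ s + f m ^ s := by linarith
      _ ≤ (∑ i ∈ Finset.range m, f i + f m) ^ s :=
        real_add_rpow_aux _ _ _
          (Finset.sum_nonneg fun i hi => hf' i (Finset.mem_range.mp hi))
          (hf m (by omega)) hs

set_option maxHeartbeats 1000000 in
/-- Lemma 2.2 (first part): sum of s-th powers of consecutive gaps of a δ-separated,
nearly collinear set is controlled by the s-th power of the total span. -/
theorem sum_rpow_consecutive_dist_le {N n : ℕ} (hn : 2 ≤ n) (s α δ : ℝ) (hs : 1 ≤ s)
    (hα0 : 0 < α) (hα : α ≤ 1 / 16) (hδ : 0 < δ)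
    (v : ℕ → EuclideanSpace ℝ (Fin N))
    (p u : EuclideanSpace ℝ (Fin N)) (hu : ‖u‖ = 1)
    (hsep : ∀ i < n, ∀ j < n, i ≠ j → δ ≤ dist (v i) (v j))
    (hclose : ∀ i < n, Metric.infDist (v i) {y | ∃ t : ℝ, y = p + t • u} ≤ α * δ)
    (hmono : ∀ i j : ℕ, i < j → j < n →
      (inner ℝ (v i - p) u : ℝ) < (inner ℝ (v j - p) u : ℝ)) :
    ∑ i ∈ Finset.range (n - 1), dist (v (i + 1)) (v i) ^ s
      ≤ (1 + 3 * α ^ 2) ^ s * dist (v 0) (v (n - 1)) ^ s := by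
  set T : ℕ → ℝ := fun i => (inner ℝ (v i - p) u : ℝ) with hT
  set w : ℕ → EuclideanSpace ℝ (Fin N) := fun i => v i - p - T i • u with hw
  have hwu : ∀ i, (inner ℝ (w i) u : ℝ) = 0 := by
    intro i
    simp only [hw, hT, inner_sub_left, real_inner_smul_left, real_inner_self_eq_norm_sq, hu]
    ring
  -- distance from v i to the line is ‖w i‖
  have hwnorm : ∀ i < n, ‖w i‖ ≤ α * δ := by
    intro i hi
    refine le_trans ?_ (hclose i hi)
    by_contra hlt
    push_neg at hlt
    have hne : Set.Nonempty {y : EuclideanSpace ℝ (Fin N) | ∃ t : ℝ, y = p + t • u} :=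
      ⟨p, 0, by simp⟩
    obtain ⟨y, ⟨t, rfl⟩, hy⟩ := (infDist_lt_iff hne).mp hlt
    have hd : dist (v i) (p + t • u) = ‖w i + (T i - t) • u‖ := by
      rw [dist_eq_norm]
      congr 1
      simp only [hw]
      module
    have h2 : ‖w i + (T i - t) • u‖ ^ 2 = ‖w i‖ ^ 2 + (T i - t) ^ 2 :=
      norm_add_smul_sq_aux _ _ hu (hwu i) _
    nlinarith [norm_nonneg (w i), norm_nonneg (w i + (T i - t) • u), hd ▸ hy, sq_nonneg (T i - t)]
  -- decompositions for consecutive differences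
  have hdist : ∀ i, dist (v (i+1)) (v i) = ‖(w (i+1) - w i) + (T (i+1) - T i) • u‖ := by
    intro i
    rw [dist_eq_norm]
    congr 1
    simp only [hw]
    module
  have hwuu : ∀ i, (inner ℝ (w (i+1) - w i) u : ℝ) = 0 := by
    intro i; rw [inner_sub_left, hwu, hwu]; ring
  -- key pointwise inequality
  have key : ∀ i < n - 1, dist (v (i+1)) (v i) ≤ (1 + 3 * α ^ 2) * (T (i+1) - T i) := by
    intro i hi
    have hi1 : i + 1 < n := by omega
    have hin : i < n := by omega
    have hDpos : 0 < T (i+1) - T i := sub_pos.mpr (hmono i (i+1) (by omega) hi1)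
    have hsq : dist (v (i+1)) (v i) ^ 2 = ‖w (i+1) - w i‖ ^ 2 + (T (i+1) - T i) ^ 2 := by
      rw [hdist i]; exact norm_add_smul_sq_aux _ _ hu (hwuu i) _
    have hwd : ‖w (i+1) - w i‖ ≤ 2 * α * δ := by
      calc ‖w (i+1) - w i‖ ≤ ‖w (i+1)‖ + ‖w i‖ := norm_sub_le _ _
        _ ≤ α * δ + α * δ := add_le_add (hwnorm _ hi1) (hwnorm _ hin)
        _ = 2 * α * δ := by ring
    have hsepi : δ ≤ dist (v (i+1)) (v i) := hsep (i+1) hi1 i hin (by omega)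
    -- δ² ≤ d² = ‖Δw‖² + D² ≤ 4α²δ² + D²
    have h1 : δ ^ 2 * (1 - 4 * α ^ 2) ≤ (T (i+1) - T i) ^ 2 := by
      nlinarith [norm_nonneg (w (i+1) - w i), dist_nonneg (x := v (i+1)) (y := v i)]
    have hαα : α ^ 2 ≤ 1 / 256 := by nlinarith
    have hw2 : ‖w (i+1) - w i‖ ^ 2 ≤ 4 * α ^ 2 * δ ^ 2 := by
      nlinarith [norm_nonneg (w (i+1) - w i)]
    have h1' := mul_le_mul_of_nonneg_left h1 (by positivity : (0:ℝ) ≤ 6 * α ^ 2)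
    have hd2 : dist (v (i+1)) (v i) ^ 2 ≤ ((1 + 3 * α ^ 2) * (T (i+1) - T i)) ^ 2 := by
      nlinarith [mul_nonneg (sq_nonneg α) (sq_nonneg δ), mul_pos hδ hδ, sq_nonneg (α * δ),
        mul_nonneg (mul_nonneg (sq_nonneg α) (sq_nonneg α)) (sq_nonneg (T (i+1) - T i)),
        mul_nonneg (sq_nonneg α) (sq_nonneg (T (i+1) - T i))]
    have hRnn : 0 ≤ (1 + 3 * α ^ 2) * (T (i+1) - T i) := by positivity
    nlinarith [dist_nonneg (x := v (i+1)) (y := v i), hd2, hRnn]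
  have hs0 : 0 ≤ s := by linarith
  have hc : 0 ≤ 1 + 3 * α ^ 2 := by nlinarith
  have hD : ∀ i < n - 1, (0:ℝ) ≤ T (i+1) - T i := fun i hi =>
    le_of_lt (sub_pos.mpr (hmono i (i+1) (by omega) (by omega)))
  have htel : ∑ i ∈ Finset.range (n-1), (T (i+1) - T i) = T (n-1) - T 0 :=
    Finset.sum_range_sub T (n-1)
  have hspan : T (n-1) - T 0 ≤ dist (v 0) (v (n-1)) := by
    have : T (n-1) - T 0 = (inner ℝ (v (n-1) - v 0) u : ℝ) := by
      simp only [hT, ← inner_sub_left]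
      congr 1
      abel
    rw [this, dist_comm, dist_eq_norm]
    calc (inner ℝ (v (n-1) - v 0) u : ℝ) ≤ ‖v (n-1) - v 0‖ * ‖u‖ := real_inner_le_norm _ _
      _ = ‖v (n-1) - v 0‖ := by rw [hu, mul_one]
  calc ∑ i ∈ Finset.range (n-1), dist (v (i+1)) (v i) ^ s
      ≤ ∑ i ∈ Finset.range (n-1), ((1 + 3 * α ^ 2) * (T (i+1) - T i)) ^ s := by
        refine Finset.sum_le_sum fun i hi => ?_
        exact Real.rpow_le_rpow dist_nonneg (key i (Finset.mem_range.mp hi)) hs0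
    _ = ∑ i ∈ Finset.range (n-1), (1 + 3 * α ^ 2) ^ s * (T (i+1) - T i) ^ s := by
        refine Finset.sum_congr rfl fun i hi => ?_
        exact Real.mul_rpow hc (hD i (Finset.mem_range.mp hi))
    _ = (1 + 3 * α ^ 2) ^ s * ∑ i ∈ Finset.range (n-1), (T (i+1) - T i) ^ s := by
        rw [Finset.mul_sum]
    _ ≤ (1 + 3 * α ^ 2) ^ s * (∑ i ∈ Finset.range (n-1), (T (i+1) - T i)) ^ s := by
        refine mul_le_mul_of_nonneg_left ?_ (Real.rpow_nonneg hc s)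
        exact sum_rpow_le_rpow_sum_aux _ _ hD s hs
    _ ≤ (1 + 3 * α ^ 2) ^ s * dist (v 0) (v (n-1)) ^ s := by
        refine mul_le_mul_of_nonneg_left ?_ (Real.rpow_nonneg hc s)
        refine Real.rpow_le_rpow ?_ (htel ▸ hspan) hs0
        rw [htel]
        have := hmono 0 (n-1) (by omega) (by omega)
        linarith
end

section
/- Let $s \geq 1$, $\alpha \in (0, 1/16]$, and $\delta > 0$. Suppose $V = \{v_1, \dots, v_n\} \subset \mathbb{R}^N$ is a $\delta$-separated set with $n \geq 3$ lying within distance $\alpha\delta$ of a line $\ell$, enumerated so that the orthogonal projections onto $\ell$ are increasing. Then $\sum_{i=1}^{n-1} |v_{i+1} - v_i|^s \leq \big((1 + 3\alpha^2)|v_1 - v_n| - \delta\big)^s + \delta^s$. -/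
open Metric

private lemma real_add_rpow' {s a b : ℝ} (hs : 1 ≤ s) (ha : 0 ≤ a) (hb : 0 ≤ b) :
    a ^ s + b ^ s ≤ (a + b) ^ s := by
  have h := NNReal.add_rpow_le_rpow_add a.toNNReal b.toNNReal hs
  have h' := NNReal.coe_le_coe.2 h
  simpa [NNReal.coe_rpow, Real.coe_toNNReal _ ha, Real.coe_toNNReal _ hb] using h'

private lemma aux_superadd' {s : ℝ} (hs : 1 ≤ s) (f : ℕ → ℝ) (hf : ∀ i, 0 ≤ f i) (m : ℕ) :
    ∑ i ∈ Finset.range m, f i ^ s ≤ (∑ i ∈ Finset.range m, f i) ^ s := by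
  induction m with
  | zero => simp [Real.zero_rpow (by linarith : s ≠ 0)]
  | succ k ih =>
    rw [Finset.sum_range_succ, Finset.sum_range_succ]
    calc ∑ i ∈ Finset.range k, f i ^ s + f k ^ s
        ≤ (∑ i ∈ Finset.range k, f i) ^ s + f k ^ s := by linarith
      _ ≤ (∑ i ∈ Finset.range k, f i + f k) ^ s :=
          real_add_rpow' hs (Finset.sum_nonneg fun i _ => hf i) (hf k)

private lemma aux_two' {s δ x y : ℝ} (hs : 1 ≤ s) (hδ : 0 < δ) (hx : δ ≤ x) (hy : δ ≤ y) :
    x ^ s + y ^ s ≤ (x + y - δ) ^ s + δ ^ s := by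
  have hcv := convexOn_rpow hs
  rcases eq_or_lt_of_le (by linarith : (0:ℝ) ≤ x + y - 2*δ) with hD | hD
  · have hx' : x = δ := by linarith
    have hy' : y = δ := by linarith
    rw [hx', hy', show δ + δ - δ = δ by ring]
  · have hDne : x + y - 2*δ ≠ 0 := ne_of_gt hD
    have hl1 : 0 ≤ (y - δ)/(x + y - 2*δ) := div_nonneg (by linarith) hD.le
    have hl2 : 0 ≤ (x - δ)/(x + y - 2*δ) := div_nonneg (by linarith) hD.le
    have hl12 : (y - δ)/(x + y - 2*δ) + (x - δ)/(x + y - 2*δ) = 1 := by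
      rw [← add_div, div_eq_one_iff_eq hDne]
      ring
    have hmem1 : δ ∈ Set.Ici (0:ℝ) := le_of_lt hδ
    have hmem2 : x + y - δ ∈ Set.Ici (0:ℝ) := by
      simp only [Set.mem_Ici]; linarith
    have h1 := hcv.2 hmem1 hmem2 hl1 hl2 hl12
    have h2 := hcv.2 hmem1 hmem2 hl2 hl1 (by linarith)
    simp only [smul_eq_mul] at h1 h2
    have e1 : (y - δ)/(x + y - 2*δ) * δ + (x - δ)/(x + y - 2*δ) * (x + y - δ) = x := by
      rw [div_mul_eq_mul_div, div_mul_eq_mul_div, ← add_div, div_eq_iff hDne]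
      ring
    have e2 : (x - δ)/(x + y - 2*δ) * δ + (y - δ)/(x + y - 2*δ) * (x + y - δ) = y := by
      rw [div_mul_eq_mul_div, div_mul_eq_mul_div, ← add_div, div_eq_iff hDne]
      ring
    rw [e1] at h1
    rw [e2] at h2
    have hsum := add_le_add h1 h2
    have hc : (y - δ)/(x + y - 2*δ) * δ ^ s + (x - δ)/(x + y - 2*δ) * (x + y - δ) ^ s
        + ((x - δ)/(x + y - 2*δ) * δ ^ s + (y - δ)/(x + y - 2*δ) * (x + y - δ) ^ s)
        = (x + y - δ) ^ s + δ ^ s := by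
      linear_combination (δ ^ s + (x + y - δ) ^ s) * hl12
    linarith

/-- Lemma 2.2 (second part): for at least three δ-separated, nearly collinear points,
the sum of s-th powers of consecutive gaps satisfies the sharper estimate
`∑ |v_{i+1}-v_i|^s ≤ ((1+3α²)|v₁-vₙ| - δ)^s + δ^s`. -/
theorem sum_rpow_consecutive_dist_le' {N n : ℕ} (hn : 3 ≤ n) (s α δ : ℝ) (hs : 1 ≤ s)
    (hα0 : 0 < α) (hα : α ≤ 1 / 16) (hδ : 0 < δ)
    (v : ℕ → EuclideanSpace ℝ (Fin N))
    (p u : EuclideanSpace ℝ (Fin N)) (hu : ‖u‖ = 1)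
    (hsep : ∀ i < n, ∀ j < n, i ≠ j → δ ≤ dist (v i) (v j))
    (hclose : ∀ i < n, Metric.infDist (v i) {y | ∃ t : ℝ, y = p + t • u} ≤ α * δ)
    (hmono : ∀ i j : ℕ, i < j → j < n →
      (inner ℝ (v i - p) u : ℝ) < (inner ℝ (v j - p) u : ℝ)) :
    ∑ i ∈ Finset.range (n - 1), dist (v (i + 1)) (v i) ^ s
      ≤ ((1 + 3 * α ^ 2) * dist (v 0) (v (n - 1)) - δ) ^ s + δ ^ s := by
  have hα2 : α ^ 2 ≤ 1 / 256 := by nlinarith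
  have huu : (inner ℝ u u : ℝ) = 1 := by
    rw [real_inner_self_eq_norm_sq, hu]; norm_num
  set T : ℕ → ℝ := fun i => (inner ℝ (v i - p) u : ℝ) with hT
  set q : ℕ → EuclideanSpace ℝ (Fin N) := fun i => v i - p - T i • u with hq
  have hqu : ∀ i, (inner ℝ (q i) u : ℝ) = 0 := by
    intro i
    show (inner ℝ (v i - p - T i • u) u : ℝ) = 0
    rw [inner_sub_left, real_inner_smul_left, huu, mul_one]
    show T i - T i = 0
    ring
  have hSne : ({y | ∃ t : ℝ, y = p + t • u} : Set (EuclideanSpace ℝ (Fin N))).Nonempty :=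
    ⟨p, 0, by simp⟩
  have hqnorm : ∀ i, i < n → ‖q i‖ ≤ α * δ := by
    intro i hi
    refine le_trans ?_ (hclose i hi)
    by_contra hcon
    push_neg at hcon
    obtain ⟨y, ⟨t, rfl⟩, hlt⟩ := (Metric.infDist_lt_iff hSne).1 hcon
    have hdec : v i - (p + t • u) = q i + (T i - t) • u := by
      simp only [hq, sub_smul]
      abel
    have hsq : dist (v i) (p + t • u) ^ 2 = ‖q i‖ ^ 2 + (T i - t) ^ 2 := by
      rw [dist_eq_norm, hdec, norm_add_sq_real, real_inner_smul_right, hqu i, norm_smul, hu]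
      simp [Real.norm_eq_abs, sq_abs]
    nlinarith [dist_nonneg (x := v i) (y := p + t • u), norm_nonneg (q i),
      sq_nonneg (T i - t)]
  have h0 : ∀ i j : ℕ, (inner ℝ u (q i - q j) : ℝ) = 0 := by
    intro i j
    rw [real_inner_comm, inner_sub_left, hqu, hqu, sub_zero]
  have hdiff : ∀ i : ℕ, v (i+1) - v i = (T (i+1) - T i) • u + (q (i+1) - q i) := by
    intro i
    simp only [hq, sub_smul]
    abel
  have hdist_sq : ∀ i : ℕ, dist (v (i+1)) (v i) ^ 2
      = (T (i+1) - T i) ^ 2 + ‖q (i+1) - q i‖ ^ 2 := by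
    intro i
    rw [dist_eq_norm, hdiff i, norm_add_sq_real, real_inner_smul_left, h0, norm_smul, hu]
    simp [Real.norm_eq_abs, sq_abs]
  -- key per-gap estimates
  have hdlb : ∀ i : ℕ, i + 1 < n → δ ≤ dist (v (i+1)) (v i) := by
    intro i hi
    exact hsep (i+1) hi i (by omega) (by omega)
  have hkey : ∀ i : ℕ, i + 1 < n →
      dist (v (i+1)) (v i) ≤ (1 + 3 * α ^ 2) * (T (i+1) - T i) := by
    intro i hi
    have hg : 0 < T (i+1) - T i := by
      have := hmono i (i+1) (lt_add_one i) hi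
      simp only [hT]
      linarith
    have hP : ‖q (i+1) - q i‖ ≤ 2 * (α * δ) := by
      calc ‖q (i+1) - q i‖ ≤ ‖q (i+1)‖ + ‖q i‖ := norm_sub_le _ _
        _ ≤ 2 * (α * δ) := by linarith [hqnorm (i+1) hi, hqnorm i (by omega)]
    have hPnn : 0 ≤ ‖q (i+1) - q i‖ := norm_nonneg _
    have hd2 := hdist_sq i
    have hd := hdlb i hi
    have hP2 : ‖q (i+1) - q i‖ ^ 2 ≤ 4 * (α^2 * δ^2) := by nlinarith
    have hg2 : δ^2 * (1 - 4 * α^2) ≤ (T (i+1) - T i) ^ 2 := by nlinarith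
    have hgoal2 : dist (v (i+1)) (v i) ^ 2 ≤ ((1 + 3 * α ^ 2) * (T (i+1) - T i)) ^ 2 := by
      nlinarith [hd2, hP2, mul_le_mul_of_nonneg_left hg2 (sq_nonneg α),
        mul_nonneg (mul_nonneg (sq_nonneg α) (sq_nonneg α)) (sq_nonneg (T (i+1) - T i)),
        mul_nonneg (mul_nonneg (sq_nonneg α) (sq_nonneg δ))
          (by linarith : (0:ℝ) ≤ 2 - 24 * α ^ 2)]
    have hcnn : 0 ≤ (1 + 3 * α ^ 2) * (T (i+1) - T i) := by positivity
    exact le_of_pow_le_pow_left₀ two_ne_zero hcnn hgoal2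
  -- telescoping sum bound
  have hsum_g : ∑ i ∈ Finset.range (n-1), (T (i+1) - T i) = T (n-1) - T 0 :=
    Finset.sum_range_sub T (n-1)
  have hTD : T (n-1) - T 0 ≤ dist (v 0) (v (n-1)) := by
    have he : T (n-1) - T 0 = (inner ℝ (v (n-1) - v 0) u : ℝ) := by
      rw [show v (n-1) - v 0 = (v (n-1) - p) - (v 0 - p) by abel, inner_sub_left]
    rw [he, dist_comm, dist_eq_norm]
    calc (inner ℝ (v (n-1) - v 0) u : ℝ) ≤ ‖v (n-1) - v 0‖ * ‖u‖ := real_inner_le_norm _ _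
      _ = ‖v (n-1) - v 0‖ := by rw [hu, mul_one]
  have hsum_d : ∑ i ∈ Finset.range (n-1), dist (v (i+1)) (v i)
      ≤ (1 + 3 * α ^ 2) * dist (v 0) (v (n-1)) := by
    calc ∑ i ∈ Finset.range (n-1), dist (v (i+1)) (v i)
        ≤ ∑ i ∈ Finset.range (n-1), (1 + 3 * α ^ 2) * (T (i+1) - T i) := by
          refine Finset.sum_le_sum fun i hi => ?_
          exact hkey i (by have := Finset.mem_range.1 hi; omega)
      _ = (1 + 3 * α ^ 2) * (T (n-1) - T 0) := by rw [← Finset.mul_sum, hsum_g]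
      _ ≤ (1 + 3 * α ^ 2) * dist (v 0) (v (n-1)) := by
          have : (0:ℝ) ≤ 1 + 3 * α ^ 2 := by positivity
          exact mul_le_mul_of_nonneg_left hTD this
  -- final combinatorial step
  have hm : n - 1 = (n - 2) + 1 := by omega
  rw [hm, Finset.sum_range_succ]
  set X := ∑ i ∈ Finset.range (n-2), dist (v (i+1)) (v i) with hX
  set Y := dist (v (n-2+1)) (v (n-2)) with hY
  have hXnn : ∀ i ∈ Finset.range (n-2), (0:ℝ) ≤ dist (v (i+1)) (v i) :=
    fun i _ => dist_nonneg
  have hXδ : δ ≤ X := by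
    have h01 : (0:ℕ) ∈ Finset.range (n-2) := Finset.mem_range.2 (by omega)
    calc δ ≤ dist (v 1) (v 0) := hdlb 0 (by omega)
      _ ≤ X := Finset.single_le_sum hXnn h01
  have hYδ : δ ≤ Y := hdlb (n-2) (by omega)
  have hXY : X + Y ≤ (1 + 3 * α ^ 2) * dist (v 0) (v (n-2+1)) := by
    have := hsum_d
    rw [hm, Finset.sum_range_succ] at this
    exact this
  have step1 : ∑ i ∈ Finset.range (n-2), dist (v (i+1)) (v i) ^ s ≤ X ^ s :=
    aux_superadd' hs _ (fun i => dist_nonneg) (n-2)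
  have step2 : X ^ s + Y ^ s ≤ (X + Y - δ) ^ s + δ ^ s := aux_two' hs hδ hXδ hYδ
  have step3 : (X + Y - δ) ^ s ≤ ((1 + 3 * α ^ 2) * dist (v 0) (v (n-2+1)) - δ) ^ s := by
    apply Real.rpow_le_rpow (by linarith) (by linarith) (by linarith)
  linarith
end

section
/- Let $s > 1$, and let $0 < a < 1$ be fixed. Then there exists $\epsilon > 0$ such that $(1 + 3\epsilon^2 - a)^s + a^s \leq 1$. Consequently, for $\delta$-separated sets $\{v_1,\dots,v_n\}$ ($n \geq 3$) lying within $\epsilon\delta$ of a line, ordered by projection, and satisfying $\delta/|v_1 - v_n| \geq a$ and $a \leq (1+3\epsilon^2) - \delta/|v_1-v_n|$, one has $\sum_{i=1}^{n-1} |v_{i+1} - v_i|^s \leq |v_1 - v_n|^s$. -/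
set_option maxHeartbeats 1000000

open Metric Finset Filter Topology

private lemma tube_sq_le {x y : ℝ} (hy : 0 ≤ y) (h : x ^ 2 ≤ y ^ 2) (hx : 0 ≤ x) : x ≤ y := by
  nlinarith

private lemma tube_eps_choice (s a : ℝ) (hs : 1 < s) (ha0 : 0 < a) (ha1 : a < 1) :
    ∃ ε : ℝ, 0 < ε ∧ ε ^ 2 < 1/16 ∧ (1 + 3 * ε ^ 2 - a) ^ s + a ^ s ≤ 1 ∧
      (1 - a * Real.sqrt (1 - 4 * ε ^ 2)) ^ (s - 1) ≤ (Real.sqrt (1 - 4 * ε ^ 2)) ^ s := by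
  have key : (1 - a) ^ s + a ^ s < 1 := by
    have h1 : a ^ s < a := by
      calc a ^ s < a ^ (1 : ℝ) := Real.rpow_lt_rpow_of_exponent_gt ha0 ha1 hs
        _ = a := Real.rpow_one a
    have h2 : (1 - a) ^ s < 1 - a := by
      calc (1 - a) ^ s < (1 - a) ^ (1 : ℝ) :=
            Real.rpow_lt_rpow_of_exponent_gt (by linarith) (by linarith) hs
        _ = 1 - a := Real.rpow_one _
    linarith
  have c1 : ContinuousAt (fun ε : ℝ => (1 + 3 * ε ^ 2 - a) ^ s + a ^ s) 0 := by
    exact (ContinuousAt.rpow_const (by fun_prop) (Or.inr (by linarith))).add continuousAt_const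
  have e1 : ∀ᶠ ε : ℝ in 𝓝 0, (1 + 3 * ε ^ 2 - a) ^ s + a ^ s < 1 := by
    refine c1 (Iio_mem_nhds ?_)
    norm_num
    exact key
  have c2 : ContinuousAt (fun ε : ℝ =>
      (1 - a * Real.sqrt (1 - 4 * ε ^ 2)) ^ (s - 1) - (Real.sqrt (1 - 4 * ε ^ 2)) ^ s) 0 := by
    exact (ContinuousAt.rpow_const (by fun_prop) (Or.inr (by linarith))).sub
      (ContinuousAt.rpow_const (by fun_prop) (Or.inr (by linarith)))
  have e2 : ∀ᶠ ε : ℝ in 𝓝 0,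
      (1 - a * Real.sqrt (1 - 4 * ε ^ 2)) ^ (s - 1) - (Real.sqrt (1 - 4 * ε ^ 2)) ^ s < 0 := by
    refine c2 (Iio_mem_nhds ?_)
    have : (1 - a : ℝ) ^ (s-1) < 1 := Real.rpow_lt_one (by linarith) (by linarith) (by linarith)
    norm_num [Real.sqrt_one]
    simpa using this
  have e3 : ∀ᶠ ε : ℝ in 𝓝 0, ε ^ 2 < 1/16 := by
    have c3 : ContinuousAt (fun ε : ℝ => ε ^ 2) 0 := by fun_prop
    refine c3 (Iio_mem_nhds ?_)
    norm_num
  obtain ⟨ε, hε, hεpos⟩ :=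
    (((e1.and (e2.and e3)).filter_mono nhdsWithin_le_nhds).and
      (eventually_mem_nhdsWithin (s := Set.Ioi (0:ℝ)) (a := (0:ℝ)))).exists
  exact ⟨ε, hεpos, hε.2.2, le_of_lt hε.1, by linarith [hε.2.1]⟩

/-- Tube control (Lemma 2.5): for `s > 1` and `0 < a < 1` there is `ε > 0` with
`(1 + 3ε² - a)^s + a^s ≤ 1`; consequently, δ-separated sets of at least three points lying
within `εδ` of a line, ordered by projection, with `a ≤ δ/|v₁-vₙ|` and
`a ≤ (1+3ε²) - δ/|v₁-vₙ|`, satisfy `∑ |v_{i+1}-v_i|^s ≤ |v₁-vₙ|^s`. -/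
theorem tube_control {N : ℕ} (s a : ℝ) (hs : 1 < s) (ha0 : 0 < a) (ha1 : a < 1) :
    ∃ ε > (0 : ℝ), (1 + 3 * ε ^ 2 - a) ^ s + a ^ s ≤ 1 ∧
      ∀ (n : ℕ), 3 ≤ n → ∀ (δ : ℝ), 0 < δ →
      ∀ (v : ℕ → EuclideanSpace ℝ (Fin N)) (p u : EuclideanSpace ℝ (Fin N)), ‖u‖ = 1 →
      (∀ i < n, ∀ j < n, i ≠ j → δ ≤ dist (v i) (v j)) →
      (∀ i < n, Metric.infDist (v i) {y | ∃ t : ℝ, y = p + t • u} ≤ ε * δ) →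
      (∀ i j : ℕ, i < j → j < n →
        (inner ℝ (v i - p) u : ℝ) < (inner ℝ (v j - p) u : ℝ)) →
      a ≤ δ / dist (v 0) (v (n - 1)) →
      a ≤ (1 + 3 * ε ^ 2) - δ / dist (v 0) (v (n - 1)) →
      ∑ i ∈ Finset.range (n - 1), dist (v (i + 1)) (v i) ^ s
        ≤ dist (v 0) (v (n - 1)) ^ s := by
  obtain ⟨ε, hε0, hε16, hkey1, hgeo⟩ := tube_eps_choice s a hs ha0 ha1
  refine ⟨ε, hε0, hkey1, ?_⟩
  intro n hn δ hδ v p u hu hsep htube hord haD _haD'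
  set c := Real.sqrt (1 - 4 * ε ^ 2) with hc
  have h4ε : 4 * ε ^ 2 < 1 := by nlinarith
  have hc0 : 0 < c := Real.sqrt_pos.mpr (by linarith)
  have hcsq : c ^ 2 = 1 - 4 * ε ^ 2 := Real.sq_sqrt (by linarith)
  have hc1 : c ≤ 1 := by nlinarith
  -- notation
  set t : ℕ → ℝ := fun i => (inner ℝ (v i - p) u : ℝ) with ht
  set w : ℕ → EuclideanSpace ℝ (Fin N) := fun i => v i - p - t i • u with hwdef
  have huu : (inner ℝ u u : ℝ) = 1 := by
    rw [real_inner_self_eq_norm_sq, hu]; norm_num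
  have horth : ∀ i, (inner ℝ (w i) u : ℝ) = 0 := by
    intro i
    have h1 : (inner ℝ (w i) u : ℝ) = inner ℝ (v i - p) u - t i * inner ℝ u u := by
      simp only [hwdef, inner_sub_left, real_inner_smul_left]
    rw [h1, huu, ht]; ring
  -- tube bound on w
  have hw : ∀ i < n, ‖w i‖ ≤ ε * δ := by
    intro i hi
    refine le_trans ?_ (htube i hi)
    by_contra hlt
    push_neg at hlt
    obtain ⟨y, hy, hylt⟩ := (infDist_lt_iff
      (show Set.Nonempty {y | ∃ τ : ℝ, y = p + τ • u} from ⟨p, ⟨0, by simp⟩⟩)).mp hlt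
    obtain ⟨τ, rfl⟩ := hy
    have hdecomp : v i - (p + τ • u) = w i + (t i - τ) • u := by
      simp only [hwdef]; module
    have hsq : ‖w i‖ ^ 2 ≤ dist (v i) (p + τ • u) ^ 2 := by
      rw [dist_eq_norm, hdecomp, norm_add_sq_real]
      have h0 : (inner ℝ (w i) ((t i - τ) • u) : ℝ) = 0 := by
        rw [real_inner_smul_right, horth]; ring
      rw [h0]
      have : (0:ℝ) ≤ ‖(t i - τ) • u‖ ^ 2 := by positivity
      linarith
    have := tube_sq_le dist_nonneg hsq (norm_nonneg _)
    linarith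
  -- distance decomposition
  have hdist_sq : ∀ i j : ℕ, dist (v i) (v j) ^ 2 = (t i - t j) ^ 2 + ‖w i - w j‖ ^ 2 := by
    intro i j
    have hdecomp : v i - v j = (t i - t j) • u + (w i - w j) := by
      simp only [hwdef]; module
    rw [dist_eq_norm, hdecomp, norm_add_sq_real]
    have h0 : (inner ℝ ((t i - t j) • u) (w i - w j) : ℝ) = 0 := by
      rw [real_inner_smul_left, inner_sub_right, real_inner_comm,
        horth, real_inner_comm, horth]; ring
    rw [h0, norm_smul, hu]
    simp [mul_pow]
  -- gap estimates
  have hD0 : 0 < dist (v 0) (v (n - 1)) := by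
    have := hsep 0 (by omega) (n-1) (by omega) (by omega)
    linarith
  set D := dist (v 0) (v (n - 1)) with hD
  have hgap_lb : ∀ i, i + 1 < n → δ * c ≤ t (i + 1) - t i := by
    intro i hi
    have hx : 0 < t (i + 1) - t i := by
      have := hord i (i+1) (lt_add_one i) hi
      simp only [ht]; linarith
    have hd : δ ≤ dist (v (i+1)) (v i) := hsep (i+1) hi i (by omega) (by omega)
    have hwb : ‖w (i+1) - w i‖ ≤ 2 * (ε * δ) := by
      calc ‖w (i+1) - w i‖ ≤ ‖w (i+1)‖ + ‖w i‖ := norm_sub_le _ _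
        _ ≤ 2 * (ε * δ) := by
            have := hw (i+1) hi; have := hw i (by omega); linarith
    have hsq : (δ * c) ^ 2 ≤ (t (i+1) - t i) ^ 2 := by
      have h1 := hdist_sq (i+1) i
      have h2 : ‖w (i+1) - w i‖ ^ 2 ≤ 4 * ε^2 * δ^2 := by nlinarith [norm_nonneg (w (i+1) - w i)]
      have h3 : δ ^ 2 ≤ dist (v (i+1)) (v i) ^ 2 := by nlinarith
      rw [mul_pow, hcsq]
      nlinarith [h1, h2, h3]
    exact tube_sq_le (le_of_lt hx) hsq (by positivity)
  have hgap_ub : ∀ i, i + 1 < n → dist (v (i+1)) (v i) * c ≤ t (i + 1) - t i := by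
    intro i hi
    have hx : 0 < t (i + 1) - t i := by
      have := hord i (i+1) (lt_add_one i) hi
      simp only [ht]; linarith
    have hd : δ ≤ dist (v (i+1)) (v i) := hsep (i+1) hi i (by omega) (by omega)
    have hwb : ‖w (i+1) - w i‖ ≤ 2 * (ε * δ) := by
      calc ‖w (i+1) - w i‖ ≤ ‖w (i+1)‖ + ‖w i‖ := norm_sub_le _ _
        _ ≤ 2 * (ε * δ) := by
            have := hw (i+1) hi; have := hw i (by omega); linarith
    have hsq : (dist (v (i+1)) (v i) * c) ^ 2 ≤ (t (i+1) - t i) ^ 2 := by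
      have h1 := hdist_sq (i+1) i
      have h2 : ‖w (i+1) - w i‖ ^ 2 ≤ 4 * ε^2 * δ^2 := by nlinarith [norm_nonneg (w (i+1) - w i)]
      -- d^2 c^2 = d^2 (1-4ε²) ≤ d^2 - 4ε²δ² ≤ x²
      have h3 : δ ^ 2 ≤ dist (v (i+1)) (v i) ^ 2 := by nlinarith
      rw [mul_pow, hcsq]
      nlinarith [h1, h2, h3, mul_le_mul_of_nonneg_left h3 (by positivity : (0:ℝ) ≤ 4 * ε^2)]
    exact tube_sq_le (le_of_lt hx) hsq (by positivity)
  -- telescoping and total bound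
  have hX : ∑ i ∈ range (n-1), (t (i+1) - t i) = t (n-1) - t 0 := Finset.sum_range_sub t (n-1)
  have hXD : t (n-1) - t 0 ≤ D := by
    have h1 : t (n-1) - t 0 = (inner ℝ (v (n-1) - v 0) u : ℝ) := by
      simp only [ht, inner_sub_left]; ring
    rw [h1]
    calc (inner ℝ (v (n-1) - v 0) u : ℝ) ≤ ‖v (n-1) - v 0‖ * ‖u‖ := real_inner_le_norm _ _
      _ = D := by rw [hu, mul_one, ← dist_eq_norm, dist_comm, hD]
  set X := t (n-1) - t 0 with hXdef
  set m := δ * c with hm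
  have hm0 : 0 < m := by positivity
  -- each gap ≤ X - m
  have hub : ∀ i ∈ range (n-1), t (i+1) - t i ≤ X - m := by
    intro i hi
    rw [mem_range] at hi
    -- choose another index j
    have h2 : 2 ≤ n - 1 := by omega
    obtain ⟨j, hj, hji⟩ : ∃ j, j ∈ range (n-1) ∧ j ≠ i := by
      rcases eq_or_ne i 0 with rfl | h
      · exact ⟨1, by rw [mem_range]; omega, by omega⟩
      · exact ⟨0, by rw [mem_range]; omega, by omega⟩
    have hsum : X = ∑ k ∈ range (n-1), (t (k+1) - t k) := hX.symm
    have hsplit : (t (i+1) - t i) + ∑ k ∈ (range (n-1)).erase i, (t (k+1) - t k)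
        = ∑ k ∈ range (n-1), (t (k+1) - t k) :=
        Finset.add_sum_erase (range (n-1)) (fun k => t (k+1) - t k) (mem_range.mpr (by omega))
    have hrest : m ≤ ∑ k ∈ (range (n-1)).erase i, (t (k+1) - t k) := by
      refine le_trans (hgap_lb j ?_) (Finset.single_le_sum (f := fun k => t (k+1) - t k) ?_ ?_)
      · rw [mem_range] at hj; omega
      · intro k hk
        rw [Finset.mem_erase, mem_range] at hk
        show (0:ℝ) ≤ t (k+1) - t k
        linarith [hgap_lb k (by omega), hm0]
      · exact Finset.mem_erase.mpr ⟨hji, hj⟩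
    linarith [hsplit, hsum]
  -- final estimate
  have hδD : δ ≤ D := hsep 0 (by omega) (n-1) (by omega) (by omega)
  have hmD : m ≤ D := by nlinarith
  have hs0 : (0:ℝ) ≤ s := by linarith
  have hs1 : (0:ℝ) ≤ s - 1 := by linarith
  have hDm0 : 0 ≤ D - m := by linarith
  have hcs0 : 0 < c ^ s := Real.rpow_pos_of_pos hc0 s
  have hterm : ∀ i ∈ range (n-1),
      dist (v (i+1)) (v i) ^ s ≤ (t (i+1) - t i) * ((D - m) ^ (s-1) * (c ^ s)⁻¹) := by
    intro i hi
    rw [mem_range] at hi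
    have hi' : i + 1 < n := by omega
    have hxm : m ≤ t (i+1) - t i := hgap_lb i hi'
    have hx0 : 0 < t (i+1) - t i := lt_of_lt_of_le hm0 hxm
    have hdle : dist (v (i+1)) (v i) ≤ (t (i+1) - t i) / c := by
      rw [le_div_iff₀ hc0]; exact hgap_ub i hi'
    have h1 : dist (v (i+1)) (v i) ^ s ≤ ((t (i+1) - t i) / c) ^ s :=
      Real.rpow_le_rpow dist_nonneg hdle hs0
    have h2 : ((t (i+1) - t i) / c) ^ s = (t (i+1) - t i) ^ s * (c ^ s)⁻¹ := by
      rw [Real.div_rpow (le_of_lt hx0) (le_of_lt hc0), div_eq_mul_inv]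
    have h3 : (t (i+1) - t i) ^ s = (t (i+1) - t i) * (t (i+1) - t i) ^ (s - 1) := by
      have h := Real.rpow_add hx0 1 (s-1)
      rw [Real.rpow_one] at h
      rw [show (1:ℝ) + (s-1) = s by ring] at h
      exact h
    have h4 : (t (i+1) - t i) ^ (s-1) ≤ (D - m) ^ (s-1) := by
      apply Real.rpow_le_rpow (le_of_lt hx0) _ hs1
      have := hub i (mem_range.mpr hi)
      linarith
    calc dist (v (i+1)) (v i) ^ s ≤ (t (i+1) - t i) ^ s * (c ^ s)⁻¹ := by rw [← h2]; exact h1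
      _ = (t (i+1) - t i) * ((t (i+1) - t i) ^ (s-1) * (c ^ s)⁻¹) := by rw [h3]; ring
      _ ≤ (t (i+1) - t i) * ((D - m) ^ (s-1) * (c ^ s)⁻¹) := by
          apply mul_le_mul_of_nonneg_left _ (le_of_lt hx0)
          apply mul_le_mul_of_nonneg_right h4 (le_of_lt (inv_pos.mpr hcs0))
  have hsum : ∑ i ∈ range (n-1), dist (v (i+1)) (v i) ^ s
      ≤ X * ((D - m) ^ (s-1) * (c ^ s)⁻¹) := by
    calc ∑ i ∈ range (n-1), dist (v (i+1)) (v i) ^ s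
        ≤ ∑ i ∈ range (n-1), (t (i+1) - t i) * ((D - m) ^ (s-1) * (c ^ s)⁻¹) :=
          Finset.sum_le_sum hterm
      _ = (∑ i ∈ range (n-1), (t (i+1) - t i)) * ((D - m) ^ (s-1) * (c ^ s)⁻¹) :=
          (Finset.sum_mul _ _ _).symm
      _ = X * ((D - m) ^ (s-1) * (c ^ s)⁻¹) := by rw [hX]
  have hfac0 : 0 ≤ (D - m) ^ (s-1) * (c ^ s)⁻¹ :=
    mul_nonneg (Real.rpow_nonneg hDm0 _) (le_of_lt (inv_pos.mpr hcs0))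
  have hXle : X * ((D - m) ^ (s-1) * (c ^ s)⁻¹) ≤ D * ((D - m) ^ (s-1) * (c ^ s)⁻¹) :=
    mul_le_mul_of_nonneg_right hXD hfac0
  -- key comparison
  have hkey : (D - m) ^ (s-1) ≤ c ^ s * D ^ (s-1) := by
    have hacD : a * c * D ≤ m := by
      have : a * D ≤ δ := (le_div_iff₀ hD0).mp haD
      calc a * c * D = (a * D) * c := by ring
        _ ≤ δ * c := mul_le_mul_of_nonneg_right this (le_of_lt hc0)
        _ = m := rfl
    have hac1 : 0 ≤ 1 - a * c := by nlinarith
    calc (D - m) ^ (s-1) ≤ ((1 - a * c) * D) ^ (s-1) := by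
          apply Real.rpow_le_rpow hDm0 _ hs1
          nlinarith
      _ = (1 - a * c) ^ (s-1) * D ^ (s-1) := Real.mul_rpow hac1 (le_of_lt hD0)
      _ ≤ c ^ s * D ^ (s-1) :=
          mul_le_mul_of_nonneg_right hgeo (Real.rpow_nonneg (le_of_lt hD0) _)
  have hDs : D ^ s = D * D ^ (s-1) := by
    have h := Real.rpow_add hD0 1 (s-1)
    rw [Real.rpow_one] at h
    rw [show (1:ℝ) + (s-1) = s by ring] at h
    exact h
  calc ∑ i ∈ range (n-1), dist (v (i+1)) (v i) ^ s
      ≤ D * ((D - m) ^ (s-1) * (c ^ s)⁻¹) := le_trans hsum hXle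
    _ ≤ D * (c ^ s * D ^ (s-1) * (c ^ s)⁻¹) := by
        apply mul_le_mul_of_nonneg_left _ (le_of_lt hD0)
        apply mul_le_mul_of_nonneg_right hkey (le_of_lt (inv_pos.mpr hcs0))
    _ = D * D ^ (s-1) := by field_simp
    _ = D ^ s := hDs.symm
end

section
/- Let $E \subset \mathbb{R}^N$ be a bounded set, $s > 1$, and $p > 0$. If $\sum_{Q \in \Delta(\mathbb{R}^N)} \beta_E(3Q)^p (\operatorname{diam} Q)^s < \infty$, then the $s$-dimensional Hausdorff measure of $E$ is zero: $\mathcal{H}^s(E) = 0$. -/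
open Metric MeasureTheory Filter

/-- The dyadic cube `∏ᵢ [2^k mᵢ, 2^k (mᵢ+1)]` in `ℝ^N`. -/
def dyadicCube (N : ℕ) (k : ℤ) (m : Fin N → ℤ) : Set (EuclideanSpace ℝ (Fin N)) :=
  {x | ∀ i, (2 : ℝ) ^ k * m i ≤ x i ∧ x i ≤ (2 : ℝ) ^ k * (m i + 1)}

/-- The concentric dilate `3Q` of the dyadic cube `Q` indexed by `(k, m)`. -/
def dyadicCube3 (N : ℕ) (k : ℤ) (m : Fin N → ℤ) : Set (EuclideanSpace ℝ (Fin N)) :=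
  {x | ∀ i, |x i - (2 : ℝ) ^ k * (m i + 1 / 2)| ≤ 3 * (2 : ℝ) ^ k / 2}

/-- Jones beta number of a set `E` in a window `Q`: the least constant `b ≥ 0` such that
some line approximates `E ∩ Q` to within `b · diam Q`. -/
noncomputable def jonesBeta {N : ℕ} (E Q : Set (EuclideanSpace ℝ (Fin N))) : ℝ :=
  sInf {b : ℝ | 0 ≤ b ∧ ∃ p u : EuclideanSpace ℝ (Fin N),
    ∀ x ∈ E ∩ Q, Metric.infDist x {y | ∃ t : ℝ, y = p + t • u} ≤ b * Metric.diam Q}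

namespace BetaProof
variable {N : ℕ}

lemma coord_dist_le (x y : EuclideanSpace ℝ (Fin N)) (i : Fin N) : |x i - y i| ≤ dist x y := by
  rw [EuclideanSpace.dist_eq]
  have h : |x i - y i| = Real.sqrt (dist (x i) (y i) ^ 2) := by
    rw [Real.sqrt_sq_eq_abs, abs_of_nonneg dist_nonneg, Real.dist_eq]
  rw [h]
  exact Real.sqrt_le_sqrt <| Finset.single_le_sum
    (f := fun j => dist (x j) (y j) ^ 2) (fun j _ => sq_nonneg _) (Finset.mem_univ i)

lemma dist_le_of_coord {x y : EuclideanSpace ℝ (Fin N)} {b : ℝ} (hb : 0 ≤ b)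
    (h : ∀ i, |x i - y i| ≤ b) : dist x y ≤ Real.sqrt N * b := by
  rw [EuclideanSpace.dist_eq]
  have h1 : ∑ i, dist (x i) (y i) ^ 2 ≤ (N : ℝ) * b ^ 2 := by
    calc ∑ i, dist (x i) (y i) ^ 2 ≤ ∑ _i : Fin N, b ^ 2 :=
          Finset.sum_le_sum (fun i _ => by
            rw [Real.dist_eq]; exact pow_le_pow_left₀ (abs_nonneg _) (h i) 2)
    _ = (N : ℝ) * b ^ 2 := by simp [mul_comm]
  calc Real.sqrt _ ≤ Real.sqrt ((N : ℝ) * b ^ 2) := Real.sqrt_le_sqrt h1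
    _ = Real.sqrt N * b := by
        rw [Real.sqrt_mul (by positivity), Real.sqrt_sq hb]

lemma cube_coord {k : ℤ} {m : Fin N → ℤ} {x y : EuclideanSpace ℝ (Fin N)}
    (hx : x ∈ dyadicCube N k m) (hy : y ∈ dyadicCube N k m) (i : Fin N) :
    |x i - y i| ≤ 2 ^ k := by
  obtain ⟨hx1, hx2⟩ := hx i
  obtain ⟨hy1, hy2⟩ := hy i
  rw [abs_sub_le_iff]
  constructor <;> nlinarith [zpow_pos (show (0:ℝ) < 2 by norm_num) k]

lemma isBounded_cube (k : ℤ) (m : Fin N → ℤ) : Bornology.IsBounded (dyadicCube N k m) := by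
  rw [Metric.isBounded_iff]
  exact ⟨Real.sqrt N * 2 ^ k, fun x hx y hy =>
    dist_le_of_coord (by positivity) (fun i => cube_coord hx hy i)⟩

lemma diam_cube_le (k : ℤ) (m : Fin N → ℤ) :
    diam (dyadicCube N k m) ≤ Real.sqrt N * 2 ^ k :=
  diam_le_of_forall_dist_le (by positivity)
    (fun x hx y hy => dist_le_of_coord (by positivity) (fun i => cube_coord hx hy i))

lemma cube3_coord {k : ℤ} {m : Fin N → ℤ} {x y : EuclideanSpace ℝ (Fin N)}
    (hx : x ∈ dyadicCube3 N k m) (hy : y ∈ dyadicCube3 N k m) (i : Fin N) :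
    |x i - y i| ≤ 3 * 2 ^ k := by
  have h := abs_sub (x i - (2:ℝ)^k * (m i + 1/2)) (y i - (2:ℝ)^k * (m i + 1/2))
  have := hx i; have := hy i
  have heq : x i - y i = (x i - (2:ℝ)^k * (m i + 1/2)) - (y i - (2:ℝ)^k * (m i + 1/2)) := by ring
  rw [heq]
  calc |_ - _| ≤ |x i - (2:ℝ)^k * (m i + 1/2)| + |y i - (2:ℝ)^k * (m i + 1/2)| := abs_sub _ _
    _ ≤ 3 * (2:ℝ)^k / 2 + 3 * (2:ℝ)^k / 2 := add_le_add (hx i) (hy i)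
    _ = 3 * 2 ^ k := by ring

lemma isBounded_cube3 (k : ℤ) (m : Fin N → ℤ) : Bornology.IsBounded (dyadicCube3 N k m) := by
  rw [Metric.isBounded_iff]
  exact ⟨Real.sqrt N * (3 * 2 ^ k), fun x hx y hy =>
    dist_le_of_coord (by positivity) (fun i => cube3_coord hx hy i)⟩

lemma diam_cube3_le (k : ℤ) (m : Fin N → ℤ) :
    diam (dyadicCube3 N k m) ≤ Real.sqrt N * (3 * 2 ^ k) :=
  diam_le_of_forall_dist_le (by positivity)
    (fun x hx y hy => dist_le_of_coord (by positivity) (fun i => cube3_coord hx hy i))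

lemma cube_subset_cube3 (k : ℤ) (m : Fin N → ℤ) : dyadicCube N k m ⊆ dyadicCube3 N k m := by
  intro x hx i
  obtain ⟨h1, h2⟩ := hx i
  rw [abs_le]
  constructor <;> nlinarith [zpow_pos (show (0:ℝ) < 2 by norm_num) k]

lemma mem_cube_floor (k : ℤ) (x : EuclideanSpace ℝ (Fin N)) :
    x ∈ dyadicCube N k (fun i => ⌊x i / 2 ^ k⌋) := by
  intro i
  have h2 : (0:ℝ) < 2 ^ k := zpow_pos (by norm_num) k
  constructor
  · calc (2:ℝ)^k * ⌊x i / 2^k⌋ ≤ 2^k * (x i / 2^k) := by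
          have := Int.floor_le (x i / 2^k); nlinarith
    _ = x i := by field_simp
  · have := Int.lt_floor_add_one (x i / 2^k)
    have : x i / 2^k ≤ (⌊x i / 2^k⌋ + 1 : ℝ) := le_of_lt this
    calc x i = 2^k * (x i / 2^k) := by field_simp
    _ ≤ 2^k * ((⌊x i / 2^k⌋ : ℝ) + 1) := by nlinarith

lemma diam_cube_ge (hN : 1 ≤ N) (k : ℤ) (m : Fin N → ℤ) :
    (2:ℝ) ^ k ≤ diam (dyadicCube N k m) := by
  have i0 : Fin N := ⟨0, hN⟩
  let a : EuclideanSpace ℝ (Fin N) := WithLp.toLp 2 (fun i => (2:ℝ)^k * m i)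
  let b : EuclideanSpace ℝ (Fin N) :=
    WithLp.toLp 2 (fun i => if i = i0 then (2:ℝ)^k * (m i + 1) else (2:ℝ)^k * m i)
  have ha : ∀ i, a i = (2:ℝ)^k * m i := fun i => rfl
  have hb : ∀ i, b i = if i = i0 then (2:ℝ)^k * (m i + 1) else (2:ℝ)^k * m i := fun i => rfl
  have h2 : (0:ℝ) < 2 ^ k := zpow_pos (by norm_num) k
  have haQ : a ∈ dyadicCube N k m := by
    intro i; rw [ha]; exact ⟨le_refl _, by nlinarith⟩
  have hbQ : b ∈ dyadicCube N k m := by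
    intro i; rw [hb]
    by_cases h : i = i0 <;> simp [h] <;> nlinarith
  have hd : (2:ℝ)^k ≤ dist a b := by
    have hcd := coord_dist_le a b i0
    have hab : |a i0 - b i0| = 2^k := by
      rw [ha, hb, if_pos rfl]
      rw [show (2:ℝ)^k * m i0 - 2^k*(m i0 + 1) = -(2^k) by ring, abs_neg, abs_of_pos h2]
    linarith [hab ▸ hcd]
  exact hd.trans (dist_le_diam_of_mem (isBounded_cube k m) haQ hbQ)


lemma count_tube (hN : 1 ≤ N) (g : ℕ) (a : Fin N → ℤ) (lam : ℝ) (hlam : 0 < lam)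
    (p₀ u : Fin N → ℝ) (S : Set (Fin N → ℤ))
    (hS : ∀ m' ∈ S, (∀ i, a i ≤ m' i ∧ m' i ≤ a i + 2 ^ g + 1) ∧
      ∃ t : ℝ, ∀ i, |lam * m' i - (p₀ i + t * u i)| ≤ 2 * lam) :
    ∃ F : Finset (Fin N → ℤ), ↑F = S ∧ F.card ≤ (2 ^ g + 2) * 17 ^ N := by
  classical
  have hbox : S ⊆ ↑(Finset.Icc a (fun i => a i + 2 ^ g + 1)) := by
    intro m' hm'
    simp only [Finset.coe_Icc, Set.mem_Icc]
    exact ⟨fun i => ((hS m' hm').1 i).1, fun i => ((hS m' hm').1 i).2⟩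
  have hfin : S.Finite := Set.Finite.subset (Finset.Icc _ _).finite_toSet hbox
  refine ⟨hfin.toFinset, hfin.coe_toFinset, ?_⟩
  set F := hfin.toFinset with hF
  -- pick direction of maximal |u i|
  have : Nonempty (Fin N) := ⟨⟨0, hN⟩⟩
  obtain ⟨i0, -, hi0⟩ := Finset.exists_max_image Finset.univ (fun i => |u i|)
    Finset.univ_nonempty
  -- pair estimate
  have pair : ∀ m' ∈ S, ∀ m'' ∈ S, m' i0 = m'' i0 → ∀ i, m'' i - 8 ≤ m' i ∧ m' i ≤ m'' i + 8 := by
    intro m' hm' m'' hm'' e i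
    obtain ⟨-, t', ht'⟩ := hS m' hm'
    obtain ⟨-, t'', ht''⟩ := hS m'' hm''
    have h1 : |(t' - t'') * u i0| ≤ 4 * lam := by
      have e1 : (t' - t'') * u i0 =
          (lam * m' i0 - (p₀ i0 + t'' * u i0)) - (lam * m' i0 - (p₀ i0 + t' * u i0)) := by ring
      rw [e1]
      have h2 : |lam * m' i0 - (p₀ i0 + t'' * u i0)| ≤ 2 * lam := by
        rw [e]; exact ht'' i0
      calc |_ - _| ≤ |lam * m' i0 - (p₀ i0 + t'' * u i0)| +
            |lam * m' i0 - (p₀ i0 + t' * u i0)| := abs_sub _ _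
        _ ≤ 2 * lam + 2 * lam := add_le_add h2 (ht' i0)
        _ = 4 * lam := by ring
    have h3 : |(t' - t'') * u i| ≤ 4 * lam := by
      rw [abs_mul] at h1 ⊢
      calc |t' - t''| * |u i| ≤ |t' - t''| * |u i0| :=
            mul_le_mul_of_nonneg_left (hi0 i (Finset.mem_univ i)) (abs_nonneg _)
        _ ≤ 4 * lam := h1
    have h4 : |lam * ((m' i : ℝ) - m'' i)| ≤ 8 * lam := by
      have e2 : lam * ((m' i : ℝ) - m'' i) =
          (lam * m' i - (p₀ i + t' * u i)) - (lam * m'' i - (p₀ i + t'' * u i))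
            + (t' - t'') * u i := by ring
      rw [e2]
      calc |_| ≤ |(lam * m' i - (p₀ i + t' * u i)) - (lam * m'' i - (p₀ i + t'' * u i))|
            + |(t' - t'') * u i| := abs_add_le _ _
        _ ≤ (|lam * m' i - (p₀ i + t' * u i)| + |lam * m'' i - (p₀ i + t'' * u i)|)
            + |(t' - t'') * u i| := add_le_add (abs_sub _ _) le_rfl
        _ ≤ (2 * lam + 2 * lam) + 4 * lam :=
            add_le_add (add_le_add (ht' i) (ht'' i)) h3
        _ = 8 * lam := by ring
    have h5 : |(m' i : ℝ) - m'' i| ≤ 8 := by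
      rw [abs_mul, abs_of_pos hlam] at h4
      nlinarith [abs_nonneg ((m' i : ℝ) - m'' i)]
    have h6 : |m' i - m'' i| ≤ (8 : ℤ) := by
      have h7 : |(m' i : ℝ) - m'' i| ≤ 8 := h5
      rw [show (m' i : ℝ) - m'' i = ((m' i - m'' i : ℤ) : ℝ) by push_cast; ring,
        ← Int.cast_abs] at h7
      exact_mod_cast h7
    rw [abs_le] at h6
    omega
  -- fiberwise counting
  have hmap : ∀ m' ∈ F, m' i0 ∈ Finset.Icc (a i0) (a i0 + 2 ^ g + 1) := by
    intro m' hm'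
    rw [hF, Set.Finite.mem_toFinset] at hm'
    exact Finset.mem_Icc.2 ⟨((hS m' hm').1 i0).1, ((hS m' hm').1 i0).2⟩
  have hcard := Finset.card_eq_sum_card_fiberwise hmap
  rw [hcard]
  have hfiber : ∀ j ∈ Finset.Icc (a i0) (a i0 + 2 ^ g + 1),
      (F.filter fun m' => m' i0 = j).card ≤ 17 ^ N := by
    intro j _
    rcases (F.filter fun m' => m' i0 = j).eq_empty_or_nonempty with h | ⟨r, hr⟩
    · simp [h]
    · have hrS : r ∈ S ∧ r i0 = j := by
        rw [Finset.mem_filter, hF, Set.Finite.mem_toFinset] at hr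
        exact hr
      have hsub : (F.filter fun m' => m' i0 = j) ⊆
          Finset.Icc (fun i => r i - 8) (fun i => r i + 8) := by
        intro m' hm'
        rw [Finset.mem_filter, hF, Set.Finite.mem_toFinset] at hm'
        have := pair m' hm'.1 r hrS.1 (by rw [hm'.2, hrS.2])
        rw [Finset.mem_Icc]
        exact ⟨fun i => show r i - 8 ≤ m' i by linarith [(this i).1],
          fun i => show m' i ≤ r i + 8 by linarith [(this i).2]⟩
      calc (F.filter fun m' => m' i0 = j).card ≤ _ := Finset.card_le_card hsub
        _ = 17 ^ N := by
          rw [Pi.card_Icc]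
          have h17 : ∀ i : Fin N, (Finset.Icc (r i - 8) (r i + 8)).card = 17 := by
            intro i
            rw [Int.card_Icc, show r i + 8 + 1 - (r i - 8) = (17 : ℤ) by ring]
            rfl
          simp [h17, Finset.prod_const]
  calc ∑ j ∈ Finset.Icc (a i0) (a i0 + 2 ^ g + 1), (F.filter fun m' => m' i0 = j).card
      ≤ ∑ _j ∈ Finset.Icc (a i0) (a i0 + 2 ^ g + 1), 17 ^ N := Finset.sum_le_sum hfiber
    _ = (Finset.Icc (a i0) (a i0 + 2 ^ g + 1)).card * 17 ^ N := by
        rw [Finset.sum_const, smul_eq_mul]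
    _ = (2 ^ g + 2) * 17 ^ N := by
        have hc : (Finset.Icc (a i0) (a i0 + 2 ^ g + 1)).card = 2 ^ g + 2 := by
          rw [Int.card_Icc, show a i0 + 2 ^ g + 1 + 1 - a i0 = ((2 ^ g + 2 : ℕ) : ℤ) by
            push_cast; ring, Int.toNat_natCast]
        rw [hc]


lemma jonesBeta_nonneg (E Q : Set (EuclideanSpace ℝ (Fin N))) : 0 ≤ jonesBeta E Q :=
  Real.sInf_nonneg (fun _ hb => hb.1)

lemma betaSet_nonempty (E Q : Set (EuclideanSpace ℝ (Fin N))) (hQ : Bornology.IsBounded Q) :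
    {b : ℝ | 0 ≤ b ∧ ∃ p u : EuclideanSpace ℝ (Fin N),
      ∀ x ∈ E ∩ Q, Metric.infDist x {y | ∃ t : ℝ, y = p + t • u} ≤ b * Metric.diam Q}.Nonempty := by
  rcases (E ∩ Q).eq_empty_or_nonempty with h | ⟨x0, hx0⟩
  · exact ⟨0, le_refl _, 0, 0, by simp [h]⟩
  · refine ⟨1, zero_le_one, x0, 0, fun x hx => ?_⟩
    have hset : {y : EuclideanSpace ℝ (Fin N) | ∃ t : ℝ, y = x0 + t • (0:EuclideanSpace ℝ (Fin N))}
        = {x0} := by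
      ext y; simp
    rw [hset, infDist_singleton, one_mul]
    exact dist_le_diam_of_mem hQ hx.2 hx0.2

lemma exists_line_of_beta_lt {E Q : Set (EuclideanSpace ℝ (Fin N))}
    (hQ : Bornology.IsBounded Q) {b : ℝ} (hb : jonesBeta E Q < b) :
    ∃ p₀ u : EuclideanSpace ℝ (Fin N), ∀ x ∈ E ∩ Q,
      Metric.infDist x {y | ∃ t : ℝ, y = p₀ + t • u} ≤ b * Metric.diam Q := by
  obtain ⟨b', hb'mem, hb'b⟩ := exists_lt_of_csInf_lt (betaSet_nonempty E Q hQ) hb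
  obtain ⟨hb'0, p₀, u, h⟩ := hb'mem
  exact ⟨p₀, u, fun x hx => (h x hx).trans
    (mul_le_mul_of_nonneg_right hb'b.le diam_nonneg)⟩

lemma children_lemma (hN : 1 ≤ N) (E : Set (EuclideanSpace ℝ (Fin N))) (g : ℕ)
    (k : ℤ) (m : Fin N → ℤ)
    (hβ : jonesBeta E (dyadicCube3 N k m) ≤ (1/2 : ℝ) ^ g / (12 * Real.sqrt N)) :
    ∃ Ch : Finset (Fin N → ℤ), Ch.card ≤ (2 ^ g + 2) * 17 ^ N ∧
      ∀ x ∈ E ∩ dyadicCube N k m, ∃ m' ∈ Ch, x ∈ dyadicCube N (k - g) m' := by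
  have hNpos : (0:ℝ) < Real.sqrt N := Real.sqrt_pos.2 (by exact_mod_cast Nat.pos_of_ne_zero (by omega))
  set ε : ℝ := (1/2 : ℝ) ^ g / (12 * Real.sqrt N) with hε
  have hεpos : 0 < ε := by positivity
  set lam : ℝ := (2:ℝ) ^ (k - (g:ℤ)) with hlamdef
  have hlam : 0 < lam := zpow_pos (by norm_num) _
  -- extract a line
  obtain ⟨p₀, u, hline⟩ := exists_line_of_beta_lt (E := E) (isBounded_cube3 k m)
    (lt_of_le_of_lt hβ (by linarith : ε < 2 * ε))
  have hw : 2 * ε * diam (dyadicCube3 N k m) ≤ lam / 2 := by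
    have h1 : 2 * ε * diam (dyadicCube3 N k m) ≤ 2 * ε * (Real.sqrt N * (3 * 2 ^ k)) :=
      mul_le_mul_of_nonneg_left (diam_cube3_le k m) (by positivity)
    have h2 : 2 * ε * (Real.sqrt N * (3 * 2 ^ k)) = lam / 2 := by
      rw [hε, hlamdef]
      have : (2:ℝ) ^ (k - (g:ℤ)) = 2 ^ k * ((1:ℝ)/2) ^ g := by
        rw [zpow_sub₀ (by norm_num : (2:ℝ) ≠ 0)]
        rw [one_div, inv_pow, zpow_natCast]
        ring
      rw [this]
      field_simp
      ring
    linarith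
  -- the set of children indices
  set S : Set (Fin N → ℤ) :=
    {m' | ∃ x, (x ∈ E ∩ dyadicCube N k m) ∧ x ∈ dyadicCube N (k - (g:ℤ)) m'} with hS
  have hLne : ({y : EuclideanSpace ℝ (Fin N) | ∃ t : ℝ, y = p₀ + t • u}).Nonempty :=
    ⟨p₀ + (0:ℝ) • u, 0, rfl⟩
  have key : ∀ m' ∈ S, (∀ i, (fun i => 2^g * m i - 1) i ≤ m' i ∧
      m' i ≤ (fun i => 2^g * m i - 1) i + 2 ^ g + 1) ∧
      ∃ t : ℝ, ∀ i, |lam * m' i - (p₀ i + t * u i)| ≤ 2 * lam := by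
    intro m' hm'
    obtain ⟨x, ⟨hxE, hxQ⟩, hxc⟩ := hm'
    have hcoord : ∀ i, lam * m' i ≤ x i ∧ x i ≤ lam * (m' i + 1) := fun i => hxc i
    constructor
    · intro i
      have h2k : (2:ℝ)^k = lam * 2^g := by
        rw [hlamdef, ← zpow_natCast (2:ℝ) g, ← zpow_add₀ (by norm_num : (2:ℝ) ≠ 0)]
        congr 1; ring
      obtain ⟨ha1, ha2⟩ := hxQ i
      obtain ⟨hb1, hb2⟩ := hcoord i
      constructor
      · -- 2^g * m i - 1 ≤ m' i
        have : (2:ℝ)^g * m i - 1 ≤ (m' i : ℝ) := by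
          rw [h2k] at ha1
          nlinarith
        simp only []
        exact_mod_cast this
      · have : (m' i : ℝ) ≤ 2^g * m i - 1 + 2^g + 1 := by
          rw [h2k] at ha2
          nlinarith
        simp only []
        exact_mod_cast this
    · -- tube estimate
      have hx3Q : x ∈ E ∩ dyadicCube3 N k m := ⟨hxE, cube_subset_cube3 k m hxQ⟩
      have hinf : infDist x {y | ∃ t : ℝ, y = p₀ + t • u} < lam :=
        lt_of_le_of_lt ((hline x hx3Q).trans hw) (by linarith)
      obtain ⟨y, hyL, hxy⟩ := (infDist_lt_iff hLne).1 hinf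
      obtain ⟨t, rfl⟩ := hyL
      refine ⟨t, fun i => ?_⟩
      have hyi : (p₀ + t • u) i = p₀ i + t * u i := by
        simp [PiLp.add_apply, PiLp.smul_apply, smul_eq_mul]
      have h1 : |lam * m' i - x i| ≤ lam := by
        obtain ⟨hb1, hb2⟩ := hcoord i
        rw [abs_le]; constructor <;> nlinarith
      have h2 : |x i - (p₀ i + t * u i)| ≤ lam := by
        rw [← hyi]
        exact (coord_dist_le x _ i).trans hxy.le
      calc |lam * m' i - (p₀ i + t * u i)|
          = |(lam * m' i - x i) + (x i - (p₀ i + t * u i))| := by ring_nf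
        _ ≤ |lam * m' i - x i| + |x i - (p₀ i + t * u i)| := abs_add_le _ _
        _ ≤ 2 * lam := by linarith
  obtain ⟨F, hFS, hFcard⟩ := count_tube hN g _ lam hlam p₀ u S key
  refine ⟨F, hFcard, fun x hx => ?_⟩
  refine ⟨fun i => ⌊x i / lam⌋, ?_, ?_⟩
  · have : (fun i => ⌊x i / lam⌋) ∈ S := ⟨x, hx, by rw [hlamdef] at *; exact mem_cube_floor _ x⟩
    rw [← hFS] at this
    exact_mod_cast this
  · rw [hlamdef] at *
    exact mem_cube_floor _ x


lemma rec_cover (hN : 1 ≤ N) (E : Set (EuclideanSpace ℝ (Fin N))) (g : ℕ) (k₀ : ℤ)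
    (G₀ : Finset (Fin N → ℤ)) (n : ℕ) :
    ∃ (B : Finset (ℤ × (Fin N → ℤ))) (G : Finset (Fin N → ℤ)),
      (∀ b ∈ B, b.1 ≤ k₀ ∧
        (1/2 : ℝ) ^ g / (12 * Real.sqrt N) < jonesBeta E (dyadicCube3 N b.1 b.2)) ∧
      G.card ≤ ((2 ^ g + 2) * 17 ^ N) ^ n * G₀.card ∧
      E ∩ (⋃ m ∈ G₀, dyadicCube N k₀ m) ⊆
        (⋃ b ∈ B, dyadicCube N b.1 b.2) ∪ (⋃ m ∈ G, dyadicCube N (k₀ - (n : ℤ) * g) m) := by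
  classical
  induction n with
  | zero =>
    refine ⟨∅, G₀, by simp, by simp, ?_⟩
    simp only [Nat.cast_zero, zero_mul, sub_zero]
    intro x hx
    exact Or.inr hx.2
  | succ n ih =>
    obtain ⟨B, G, hB, hGcard, hcov⟩ := ih
    set K : ℕ := (2 ^ g + 2) * 17 ^ N with hK
    set kn : ℤ := k₀ - (n : ℤ) * g with hkn
    set P : (Fin N → ℤ) → Prop :=
      fun m => jonesBeta E (dyadicCube3 N kn m) ≤ (1/2 : ℝ) ^ g / (12 * Real.sqrt N) with hP
    have hch : ∀ m : Fin N → ℤ, ∃ Ch : Finset (Fin N → ℤ), Ch.card ≤ K ∧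
        (P m → ∀ x ∈ E ∩ dyadicCube N kn m, ∃ m' ∈ Ch, x ∈ dyadicCube N (kn - g) m') := by
      intro m
      by_cases hm : P m
      · obtain ⟨Ch, h1, h2⟩ := children_lemma hN E g kn m hm
        exact ⟨Ch, h1, fun _ => h2⟩
      · exact ⟨∅, by simp, fun h => absurd h hm⟩
    choose Ch hCh1 hCh2 using hch
    set Ggood : Finset (Fin N → ℤ) := G.filter P with hGgood
    set Gbad : Finset (Fin N → ℤ) := G.filter (fun m => ¬ P m) with hGbad
    refine ⟨B ∪ Gbad.image (fun m => (kn, m)), Ggood.biUnion Ch, ?_, ?_, ?_⟩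
    · intro b hb
      rcases Finset.mem_union.1 hb with hb | hb
      · exact hB b hb
      · obtain ⟨m, hm, rfl⟩ := Finset.mem_image.1 hb
        refine ⟨hkn ▸ sub_le_self k₀ (by positivity), ?_⟩
        · have := (Finset.mem_filter.1 hm).2
          exact lt_of_not_ge this
    · calc (Ggood.biUnion Ch).card ≤ ∑ m ∈ Ggood, (Ch m).card := Finset.card_biUnion_le
        _ ≤ Ggood.card * K := by
            apply Finset.sum_le_card_nsmul
            intro m _
            exact hCh1 m
        _ ≤ (K ^ n * G₀.card) * K := by
            have h1 : Ggood.card ≤ G.card := Finset.card_filter_le _ _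
            exact Nat.mul_le_mul_right K (h1.trans hGcard)
        _ = K ^ (n + 1) * G₀.card := by ring
    · intro x hx
      rcases hcov hx with hxB | hxG
      · left
        rcases Set.mem_iUnion₂.1 hxB with ⟨b, hb, hxb⟩
        exact Set.mem_iUnion₂.2 ⟨b, Finset.mem_union_left _ hb, hxb⟩
      · rcases Set.mem_iUnion₂.1 hxG with ⟨m, hm, hxm⟩
        by_cases hPm : P m
        · right
          obtain ⟨m', hm', hxm'⟩ := hCh2 m hPm x ⟨hx.1, hxm⟩
          refine Set.mem_iUnion₂.2 ⟨m', ?_, ?_⟩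
          · exact Finset.mem_biUnion.2 ⟨m, Finset.mem_filter.2 ⟨hm, hPm⟩, hm'⟩
          · have heq : kn - (g : ℤ) = k₀ - ((n : ℕ) + 1 : ℕ) * g := by
              rw [hkn]; push_cast; ring
            rw [← heq]
            exact hxm'
        · left
          refine Set.mem_iUnion₂.2 ⟨(kn, m), ?_, hxm⟩
          exact Finset.mem_union_right _
            (Finset.mem_image.2 ⟨m, Finset.mem_filter.2 ⟨hm, hPm⟩, rfl⟩)


lemma initial_cover {E : Set (EuclideanSpace ℝ (Fin N))} (hE : Bornology.IsBounded E) (k₀ : ℤ) :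
    ∃ G₀ : Finset (Fin N → ℤ), E ⊆ ⋃ m ∈ G₀, dyadicCube N k₀ m := by
  classical
  obtain ⟨R, hR⟩ := hE.subset_closedBall 0
  set c : ℤ := ⌈R / 2 ^ k₀⌉ with hc
  refine ⟨Finset.Icc (fun _ => -c) (fun _ => c), fun x hx => ?_⟩
  have h2 : (0:ℝ) < 2 ^ k₀ := zpow_pos (by norm_num) _
  have hxR : ∀ i, |x i| ≤ R := by
    intro i
    have h := coord_dist_le x 0 i
    have h0 : (0 : EuclideanSpace ℝ (Fin N)) i = 0 := rfl
    rw [h0, sub_zero] at h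
    exact h.trans (by simpa [dist_comm] using hR hx)
  refine Set.mem_iUnion₂.2 ⟨fun i => ⌊x i / 2 ^ k₀⌋, ?_, mem_cube_floor k₀ x⟩
  rw [Finset.mem_Icc]
  constructor
  · intro i
    show -c ≤ ⌊x i / 2 ^ k₀⌋
    have h1 : -(R / 2 ^ k₀) ≤ x i / 2 ^ k₀ := by
      rw [← neg_div]
      exact (div_le_div_iff_of_pos_right h2).mpr (by linarith [(abs_le.1 (hxR i)).1])
    calc -c = -⌈R / 2 ^ k₀⌉ := by rw [hc]
      _ = ⌊-(R / 2 ^ k₀)⌋ := (Int.floor_neg).symm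
      _ ≤ ⌊x i / 2 ^ k₀⌋ := Int.floor_le_floor h1
  · intro i
    show ⌊x i / 2 ^ k₀⌋ ≤ c
    have h1 : x i / 2 ^ k₀ ≤ R / 2 ^ k₀ :=
      (div_le_div_iff_of_pos_right h2).mpr (by linarith [(abs_le.1 (hxR i)).2])
    calc ⌊x i / 2 ^ k₀⌋ ≤ ⌊R / 2 ^ k₀⌋ := Int.floor_le_floor h1
      _ ≤ ⌈R / 2 ^ k₀⌉ := Int.floor_le_ceil _
      _ = c := hc.symm


lemma cover_exists (hN : 1 ≤ N)
    (E : Set (EuclideanSpace ℝ (Fin N))) (hE : Bornology.IsBounded E)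
    (s p : ℝ) (hs : 1 < s) (hp : 0 < p)
    (hsum : Summable (fun km : ℤ × (Fin N → ℤ) =>
      jonesBeta E (dyadicCube3 N km.1 km.2) ^ p * Metric.diam (dyadicCube N km.1 km.2) ^ s))
    (g : ℕ)
    (hg : (((2 ^ g + 2) * 17 ^ N : ℕ) : ℝ) * ((1/2 : ℝ) ^ g) ^ s ≤ 1/2)
    (j : ℕ) :
    ∃ C : Finset (ℤ × (Fin N → ℤ)),
      (∀ c ∈ C, c.1 ≤ -(j:ℤ)) ∧
      (E ⊆ ⋃ c ∈ C, dyadicCube N c.1 c.2) ∧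
      (∑ c ∈ C, diam (dyadicCube N c.1 c.2) ^ s ≤ 2 / (j+1)) := by
  classical
  set f : ℤ × (Fin N → ℤ) → ℝ := fun km =>
    jonesBeta E (dyadicCube3 N km.1 km.2) ^ p * diam (dyadicCube N km.1 km.2) ^ s with hf
  set ε : ℝ := (1/2 : ℝ) ^ g / (12 * Real.sqrt N) with hεdef
  have hNpos : (0:ℝ) < Real.sqrt N :=
    Real.sqrt_pos.2 (by exact_mod_cast Nat.pos_of_ne_zero (by omega))
  have hεpos : 0 < ε := by positivity
  have hεp : (0:ℝ) < ε ^ p := Real.rpow_pos_of_pos hεpos p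
  set η : ℝ := ε ^ p / (j + 1) with hη
  have hηpos : 0 < η := by positivity
  -- tail control
  obtain ⟨F, hF⟩ := hsum.tsum_vanishing (Metric.ball_mem_nhds 0 hηpos)
  -- choose the starting scale
  have hne : ((F.image Prod.fst) ∪ {-(j:ℤ)}).Nonempty :=
    ⟨-(j:ℤ), Finset.mem_union_right _ (Finset.mem_singleton_self _)⟩
  obtain ⟨kmin, hkmin1, hkmin2⟩ : ∃ kmin : ℤ, kmin ≤ -(j:ℤ) ∧ ∀ c ∈ F, kmin ≤ c.1 :=
    ⟨((F.image Prod.fst) ∪ {-(j:ℤ)}).min' hne,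
      Finset.min'_le _ _ (Finset.mem_union_right _ (Finset.mem_singleton_self _)),
      fun c hc => Finset.min'_le _ _
        (Finset.mem_union_left _ (Finset.mem_image_of_mem Prod.fst hc))⟩
  set k₀ : ℤ := kmin - 1 with hk₀
  have hk₀j : k₀ ≤ -(j:ℤ) := by omega
  have hk₀F : ∀ c ∈ F, k₀ < c.1 := fun c hc => by have := hkmin2 c hc; omega
  -- initial cover
  obtain ⟨G₀, hG₀⟩ := initial_cover hE k₀
  -- choose depth n
  have hhalf : ∃ n : ℕ, (G₀.card : ℝ) * (Real.sqrt N * 2 ^ k₀) ^ s * (1/2 : ℝ) ^ n ≤ 1 / (j+1) := by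
    have h0 : Tendsto (fun n : ℕ => (G₀.card : ℝ) * (Real.sqrt N * 2 ^ k₀) ^ s * (1/2 : ℝ) ^ n)
        atTop (nhds 0) := by
      rw [show (0:ℝ) = (G₀.card : ℝ) * (Real.sqrt N * 2 ^ k₀) ^ s * 0 by ring]
      exact (tendsto_pow_atTop_nhds_zero_of_lt_one (by norm_num) (by norm_num)).const_mul _
    obtain ⟨n, hn⟩ := (h0.eventually (eventually_le_nhds (by positivity : (0:ℝ) < 1/(j+1)))).exists
    exact ⟨n, hn⟩
  obtain ⟨n, hn⟩ := hhalf
  -- recursive cover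
  obtain ⟨B, G, hB, hGcard, hcov⟩ := rec_cover hN E g k₀ G₀ n
  set kn : ℤ := k₀ - (n : ℤ) * g with hkn
  refine ⟨B ∪ G.image (fun m => (kn, m)), ?_, ?_, ?_⟩
  · intro c hc
    rcases Finset.mem_union.1 hc with hc | hc
    · exact (hB c hc).1.trans hk₀j
    · obtain ⟨m, _, rfl⟩ := Finset.mem_image.1 hc
      have : kn ≤ k₀ := hkn ▸ sub_le_self k₀ (by positivity)
      exact this.trans hk₀j
  · intro x hx
    rcases hcov ⟨hx, hG₀ hx⟩ with hxB | hxG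
    · obtain ⟨b, hb, hxb⟩ := Set.mem_iUnion₂.1 hxB
      exact Set.mem_iUnion₂.2 ⟨b, Finset.mem_union_left _ hb, hxb⟩
    · obtain ⟨m, hm, hxm⟩ := Set.mem_iUnion₂.1 hxG
      exact Set.mem_iUnion₂.2 ⟨(kn, m),
        Finset.mem_union_right _ (Finset.mem_image.2 ⟨m, hm, rfl⟩), hxm⟩
  · -- the sum bound
    have hdnonneg : ∀ c : ℤ × (Fin N → ℤ), 0 ≤ diam (dyadicCube N c.1 c.2) ^ s :=
      fun c => Real.rpow_nonneg diam_nonneg s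
    have hsplit : ∑ c ∈ B ∪ G.image (fun m => (kn, m)), diam (dyadicCube N c.1 c.2) ^ s ≤
        (∑ c ∈ B, diam (dyadicCube N c.1 c.2) ^ s)
        + ∑ c ∈ G.image (fun m => (kn, m)), diam (dyadicCube N c.1 c.2) ^ s := by
      rw [← Finset.sum_union_inter]
      have : 0 ≤ ∑ c ∈ B ∩ G.image (fun m => (kn, m)), diam (dyadicCube N c.1 c.2) ^ s :=
        Finset.sum_nonneg (fun c _ => hdnonneg c)
      linarith
    -- bad part
    have hbad : ∑ c ∈ B, diam (dyadicCube N c.1 c.2) ^ s ≤ 1 / (j+1) := by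
      have hdisj : Disjoint (↑B : Set (ℤ × (Fin N → ℤ))) ↑F := by
        rw [Set.disjoint_left]
        intro c hcB hcF
        exact absurd (hB c hcB).1 (not_le.2 (hk₀F c hcF))
      have h1 : (∑' b : (↑B : Set (ℤ × (Fin N → ℤ))), f b) ∈ Metric.ball (0:ℝ) η := hF _ hdisj
      have h2 : ∑ c ∈ B, f c < η := by
        have heq := Finset.tsum_subtype' B f
        rw [mem_ball_zero_iff, Real.norm_eq_abs, heq] at h1
        calc ∑ c ∈ B, f c ≤ |∑ c ∈ B, f c| := le_abs_self _
          _ < η := h1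
      have h3 : ε ^ p * ∑ c ∈ B, diam (dyadicCube N c.1 c.2) ^ s ≤ ∑ c ∈ B, f c := by
        rw [Finset.mul_sum]
        apply Finset.sum_le_sum
        intro c hc
        have hβ : ε ≤ jonesBeta E (dyadicCube3 N c.1 c.2) := (hB c hc).2.le
        have : ε ^ p ≤ jonesBeta E (dyadicCube3 N c.1 c.2) ^ p :=
          Real.rpow_le_rpow hεpos.le hβ hp.le
        exact mul_le_mul_of_nonneg_right this (hdnonneg c)
      have h4 : ε ^ p * ∑ c ∈ B, diam (dyadicCube N c.1 c.2) ^ s < ε ^ p * (1/(j+1)) := by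
        rw [hη] at h2
        calc ε ^ p * ∑ c ∈ B, diam (dyadicCube N c.1 c.2) ^ s ≤ ∑ c ∈ B, f c := h3
          _ < ε ^ p / (j+1) := h2
          _ = ε ^ p * (1/(j+1)) := by ring
      exact (mul_lt_mul_iff_right₀ hεp).1 h4 |>.le
    -- good part
    have hgood : ∑ c ∈ G.image (fun m => (kn, m)), diam (dyadicCube N c.1 c.2) ^ s
        ≤ 1 / (j+1) := by
      have hinj : Set.InjOn (fun m => ((kn, m) : ℤ × (Fin N → ℤ))) ↑G := by
        intro a _ b _ h
        simpa using h
      rw [Finset.sum_image (fun a ha b hb h => hinj ha hb h)]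
      have hterm : ∀ m : Fin N → ℤ, diam (dyadicCube N kn m) ^ s ≤
          (Real.sqrt N * 2 ^ k₀) ^ s * (((1/2:ℝ) ^ g) ^ s) ^ n := by
        intro m
        have h1 : diam (dyadicCube N kn m) ≤ Real.sqrt N * 2 ^ kn := diam_cube_le kn m
        have h2 : (2:ℝ) ^ kn = 2 ^ k₀ * ((1/2:ℝ) ^ g) ^ n := by
          have e1 : ((1/2:ℝ) ^ g) ^ n = (2:ℝ) ^ (-((n:ℤ) * g)) := by
            rw [one_div, ← pow_mul, inv_pow, ← zpow_natCast (2:ℝ) (g * n), ← zpow_neg]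
            congr 1
            push_cast
            ring
          rw [e1, hkn, ← zpow_add₀ (by norm_num : (2:ℝ) ≠ 0), sub_eq_add_neg]
        calc diam (dyadicCube N kn m) ^ s ≤ (Real.sqrt N * 2 ^ kn) ^ s :=
              Real.rpow_le_rpow diam_nonneg h1 (by linarith)
          _ = (Real.sqrt N * 2 ^ k₀) ^ s * (((1/2:ℝ) ^ g) ^ n) ^ s := by
              rw [h2, ← mul_assoc, ← Real.rpow_natCast ((1/2:ℝ)^g) n,
                ← Real.mul_rpow (by positivity) (by positivity)]
          _ = (Real.sqrt N * 2 ^ k₀) ^ s * (((1/2:ℝ) ^ g) ^ s) ^ n := by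
              congr 1
              rw [← Real.rpow_natCast ((1/2:ℝ)^g) n, ← Real.rpow_mul (by positivity),
                mul_comm, Real.rpow_mul (by positivity), Real.rpow_natCast]
        
      calc ∑ m ∈ G, diam (dyadicCube N kn m) ^ s
          ≤ ∑ _m ∈ G, (Real.sqrt N * 2 ^ k₀) ^ s * (((1/2:ℝ) ^ g) ^ s) ^ n :=
            Finset.sum_le_sum (fun m _ => hterm m)
        _ = (G.card : ℝ) * ((Real.sqrt N * 2 ^ k₀) ^ s * (((1/2:ℝ) ^ g) ^ s) ^ n) := by
            rw [Finset.sum_const, nsmul_eq_mul]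
        _ ≤ ((((2 ^ g + 2) * 17 ^ N : ℕ) : ℝ) ^ n * (G₀.card : ℝ))
            * ((Real.sqrt N * 2 ^ k₀) ^ s * (((1/2:ℝ) ^ g) ^ s) ^ n) := by
            apply mul_le_mul_of_nonneg_right _ (by positivity)
            have := hGcard
            calc (G.card : ℝ) ≤ ((((2 ^ g + 2) * 17 ^ N) ^ n * G₀.card : ℕ) : ℝ) := by
                  exact_mod_cast this
              _ = (((2 ^ g + 2) * 17 ^ N : ℕ) : ℝ) ^ n * (G₀.card : ℝ) := by push_cast; ring
        _ = (G₀.card : ℝ) * (Real.sqrt N * 2 ^ k₀) ^ s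
            * ((((2 ^ g + 2) * 17 ^ N : ℕ) : ℝ) * ((1/2:ℝ) ^ g) ^ s) ^ n := by
            rw [mul_pow]
            ring
        _ ≤ (G₀.card : ℝ) * (Real.sqrt N * 2 ^ k₀) ^ s * (1/2 : ℝ) ^ n := by
            apply mul_le_mul_of_nonneg_left _ (by positivity)
            apply pow_le_pow_left₀ _ hg
            positivity
        _ ≤ 1 / (j+1) := hn
    calc ∑ c ∈ B ∪ G.image (fun m => (kn, m)), diam (dyadicCube N c.1 c.2) ^ s
        ≤ _ + _ := hsplit
      _ ≤ 1/(j+1) + 1/(j+1) := add_le_add hbad hgood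
      _ = 2 / (j+1) := by ring


lemma ediam_cube_le (k : ℤ) (m : Fin N → ℤ) :
    Metric.ediam (dyadicCube N k m) ≤ ENNReal.ofReal (Real.sqrt N * 2 ^ k) := by
  rw [← ENNReal.ofReal_toReal (isBounded_cube k m).ediam_ne_top]
  exact ENNReal.ofReal_le_ofReal (diam_cube_le k m)

theorem main {N : ℕ} (hN : 1 ≤ N)
    (E : Set (EuclideanSpace ℝ (Fin N))) (hE : Bornology.IsBounded E)
    (s p : ℝ) (hs : 1 < s) (hp : 0 < p)
    (hsum : Summable (fun km : ℤ × (Fin N → ℤ) =>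
      jonesBeta E (dyadicCube3 N km.1 km.2) ^ p * Metric.diam (dyadicCube N km.1 km.2) ^ s)) :
    μH[s] E = 0 := by
  classical
  -- choose the scale gap g
  obtain ⟨g, hg⟩ : ∃ g : ℕ, (((2 ^ g + 2) * 17 ^ N : ℕ) : ℝ) * ((1/2 : ℝ) ^ g) ^ s ≤ 1/2 := by
    have hq2 : 2 * (1/2:ℝ) ^ s < 1 := by
      have h1 : (1/2:ℝ) ^ s < (1/2:ℝ) ^ (1:ℝ) :=
        Real.rpow_lt_rpow_of_exponent_gt (by norm_num) (by norm_num) hs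
      rw [Real.rpow_one] at h1
      linarith
    have hq1 : (0:ℝ) ≤ 2 * (1/2:ℝ) ^ s := by positivity
    have h0 : Tendsto (fun g : ℕ => (3 * 17 ^ N : ℝ) * (2 * (1/2:ℝ) ^ s) ^ g)
        atTop (nhds 0) := by
      rw [show (0:ℝ) = (3 * 17 ^ N : ℝ) * 0 by ring]
      exact (tendsto_pow_atTop_nhds_zero_of_lt_one hq1 hq2).const_mul _
    obtain ⟨g, hgle⟩ :=
      (h0.eventually (eventually_le_nhds (by norm_num : (0:ℝ) < 1/2))).exists
    refine ⟨g, le_trans ?_ hgle⟩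
    have e1 : ((1/2:ℝ) ^ g) ^ s = ((1/2:ℝ) ^ s) ^ g := by
      rw [← Real.rpow_natCast ((1/2:ℝ)) g, ← Real.rpow_mul (by norm_num), mul_comm,
        Real.rpow_mul (by norm_num), Real.rpow_natCast]
    have e2 : (2 * (1/2:ℝ) ^ s) ^ g = 2 ^ g * ((1/2:ℝ) ^ s) ^ g := mul_pow _ _ _
    have hle : (((2 ^ g + 2) * 17 ^ N : ℕ) : ℝ) ≤ 3 * 2 ^ g * 17 ^ N := by
      push_cast
      have h2 : (1:ℝ) ≤ 2 ^ g := one_le_pow₀ (by norm_num)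
      have h3 : (0:ℝ) < 17 ^ N := by positivity
      nlinarith
    have hpow : (0:ℝ) ≤ ((1/2:ℝ) ^ s) ^ g := by positivity
    calc (((2 ^ g + 2) * 17 ^ N : ℕ) : ℝ) * ((1/2:ℝ) ^ g) ^ s
        = (((2 ^ g + 2) * 17 ^ N : ℕ) : ℝ) * ((1/2:ℝ) ^ s) ^ g := by rw [e1]
      _ ≤ (3 * 2 ^ g * 17 ^ N) * ((1/2:ℝ) ^ s) ^ g := mul_le_mul_of_nonneg_right hle hpow
      _ = 3 * 17 ^ N * (2 * (1/2:ℝ) ^ s) ^ g := by rw [e2]; ring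
  -- covers for each j
  choose C hC1 hC2 hC3 using fun j : ℕ => cover_exists hN E hE s p hs hp hsum g hg j
  refine le_antisymm ?_ zero_le
  have hmeas := MeasureTheory.Measure.hausdorffMeasure_le_liminf_tsum (ι := fun j : ℕ => {c // c ∈ C j}) s E
    (l := atTop) (r := fun j : ℕ => ENNReal.ofReal (Real.sqrt N * (1/2:ℝ) ^ j))
    ?_ (fun j c => dyadicCube N c.1.1 c.1.2) ?_ ?_
  · refine hmeas.trans ?_
    have hbound : ∀ j : ℕ, (∑' i : {c // c ∈ C j},
        Metric.ediam (dyadicCube N i.1.1 i.1.2) ^ s) ≤ ENNReal.ofReal (2 / (j+1)) := by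
      intro j
      rw [tsum_fintype]
      have heq : ∀ c : ℤ × (Fin N → ℤ), c ∈ C j →
          Metric.ediam (dyadicCube N c.1 c.2) ^ s
            = ENNReal.ofReal (diam (dyadicCube N c.1 c.2) ^ s) := by
        intro c _
        rw [← ENNReal.ofReal_toReal (isBounded_cube c.1 c.2).ediam_ne_top]
        rw [← ENNReal.ofReal_rpow_of_nonneg ?_ (by linarith : (0:ℝ) ≤ s)]
        · rfl
        · exact diam_nonneg
      calc ∑ i : {c // c ∈ C j}, Metric.ediam (dyadicCube N i.1.1 i.1.2) ^ s
          = ∑ i : {c // c ∈ C j}, ENNReal.ofReal (diam (dyadicCube N i.1.1 i.1.2) ^ s) := by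
            apply Finset.sum_congr rfl
            intro i _
            exact heq i.1 i.2
        _ = ∑ c ∈ C j, ENNReal.ofReal (diam (dyadicCube N c.1 c.2) ^ s) :=
            Finset.sum_coe_sort (C j) (fun c => ENNReal.ofReal (diam (dyadicCube N c.1 c.2) ^ s))
        _ = ENNReal.ofReal (∑ c ∈ C j, diam (dyadicCube N c.1 c.2) ^ s) := by
            rw [ENNReal.ofReal_sum_of_nonneg (fun c _ => Real.rpow_nonneg diam_nonneg s)]
        _ ≤ ENNReal.ofReal (2 / (j+1)) := ENNReal.ofReal_le_ofReal (hC3 j)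
    calc liminf (fun j : ℕ => ∑' i : {c // c ∈ C j},
          Metric.ediam (dyadicCube N i.1.1 i.1.2) ^ s) atTop
        ≤ liminf (fun j : ℕ => ENNReal.ofReal (2 / (j+1))) atTop :=
          liminf_le_liminf (Eventually.of_forall hbound)
      _ = 0 := by
          apply Tendsto.liminf_eq
          rw [show (0 : ENNReal) = ENNReal.ofReal 0 by simp]
          apply ENNReal.tendsto_ofReal
          have h1 : Tendsto (fun j : ℕ => (2:ℝ) / (j+1)) atTop (nhds 0) := by
            have := tendsto_natCast_atTop_atTop (R := ℝ)
            exact Tendsto.div_atTop tendsto_const_nhds (tendsto_atTop_add_const_right _ 1 this)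
          exact h1
  · -- r tends to 0
    rw [show (0 : ENNReal) = ENNReal.ofReal 0 by simp]
    apply ENNReal.tendsto_ofReal
    rw [show (0:ℝ) = Real.sqrt N * 0 by ring]
    exact (tendsto_pow_atTop_nhds_zero_of_lt_one (by norm_num) (by norm_num)).const_mul _
  · -- diameters small
    refine Eventually.of_forall (fun j => ?_)
    rintro ⟨c, hc⟩
    refine (ediam_cube_le c.1 c.2).trans (ENNReal.ofReal_le_ofReal ?_)
    have h1 : (2:ℝ) ^ c.1 ≤ 2 ^ (-(j:ℤ)) :=
      zpow_le_zpow_right₀ (by norm_num) (hC1 j c hc)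
    have h2 : (2:ℝ) ^ (-(j:ℤ)) = (1/2:ℝ) ^ j := by
      rw [zpow_neg, one_div, inv_pow, ← zpow_natCast (2:ℝ) j]
    have h3 : (0:ℝ) ≤ Real.sqrt N := Real.sqrt_nonneg _
    nlinarith [h2 ▸ h1]
  · -- coverage
    refine Eventually.of_forall (fun j => ?_)
    intro x hx
    obtain ⟨c, hc, hxc⟩ := Set.mem_iUnion₂.1 (hC2 j hx)
    exact Set.mem_iUnion.2 ⟨⟨c, hc⟩, hxc⟩


end BetaProof

/-- If `∑_Q β_E(3Q)^p (diam Q)^s < ∞` with `s > 1` and `p > 0`, then `H^s(E) = 0`. -/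
theorem hausdorffMeasure_eq_zero_of_summable_beta {N : ℕ} (hN : 1 ≤ N)
    (E : Set (EuclideanSpace ℝ (Fin N))) (hE : Bornology.IsBounded E)
    (s p : ℝ) (hs : 1 < s) (hp : 0 < p)
    (hsum : Summable (fun km : ℤ × (Fin N → ℤ) =>
      jonesBeta E (dyadicCube3 N km.1 km.2) ^ p * Metric.diam (dyadicCube N km.1 km.2) ^ s)) :
    μH[s] E = 0 :=
  BetaProof.main hN E hE s p hs hp hsum
end

section
/- Let $X$ be a Banach space, $s > 1$, $M > 0$, $0 < \xi_1 \leq \xi_2 < 1$, $\alpha, \beta > 0$, and $j_0 \in \mathbb{Z}$. Suppose $(\rho_j)_{j \geq j_0}$ are positive scales with $\rho_{j_0} = 1$ and $\xi_1 \rho_j \leq \rho_{j+1} \leq \xi_2 \rho_j$, and $f_j : [0, M] \to X$ are maps satisfying $|f_j(x) - f_j(y)| \leq \alpha \rho_j^{1-s} |x - y|$ for all $x, y$ and $\|f_j - f_{j+1}\|_\infty \leq \beta \rho_j$ for all $j \geq j_0$. Then $f_j$ converges uniformly to a map $f : [0, M] \to X$ satisfying $|f(x) - f(y)| \leq H |x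 - y|^{1/s}$ for all $x, y \in [0, M]$, where $H = \frac{\alpha}{\xi_1}\max(1, M) + \frac{2\beta}{\xi_1(1 - \xi_2)}\max(1, 1/M)$. -/
set_option maxHeartbeats 1000000

private lemma exists_min_nat {P : ℕ → Prop} (h : ∃ n, P n) :
    ∃ n, P n ∧ ∀ m < n, ¬ P m := by
  classical
  exact ⟨Nat.find h, Nat.find_spec h, fun m hm => Nat.find_min h hm⟩



/-- From Lipschitz to Hölder parameterizations (Lemma B.1): a sequence of maps with
controlled Lipschitz blow-up `α ρ_j^{1-s}` and successive distance `β ρ_j` converges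
uniformly on `[0,M]` to a `(1/s)`-Hölder map with explicit Hölder constant. -/
theorem lipschitz_to_holder {X : Type*} [NormedAddCommGroup X] [NormedSpace ℝ X]
    [CompleteSpace X]
    (s M ξ₁ ξ₂ α β : ℝ) (hs : 1 < s) (hM : 0 < M)
    (hξ₁ : 0 < ξ₁) (hξ : ξ₁ ≤ ξ₂) (hξ₂ : ξ₂ < 1) (hα : 0 < α) (hβ : 0 < β)
    (j₀ : ℤ) (ρ : ℤ → ℝ) (f : ℤ → ℝ → X)
    (hρ0 : ρ j₀ = 1) (hρpos : ∀ j, j₀ ≤ j → 0 < ρ j)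
    (hρ : ∀ j, j₀ ≤ j → ξ₁ * ρ j ≤ ρ (j + 1) ∧ ρ (j + 1) ≤ ξ₂ * ρ j)
    (hLip : ∀ j, j₀ ≤ j → ∀ x ∈ Set.Icc (0 : ℝ) M, ∀ y ∈ Set.Icc (0 : ℝ) M,
      ‖f j x - f j y‖ ≤ α * ρ j ^ (1 - s) * |x - y|)
    (hclose : ∀ j, j₀ ≤ j → ∀ x ∈ Set.Icc (0 : ℝ) M, ‖f j x - f (j + 1) x‖ ≤ β * ρ j) :
    ∃ g : ℝ → X,
      TendstoUniformlyOn (fun j x => f j x) g Filter.atTop (Set.Icc 0 M) ∧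
      ∀ x ∈ Set.Icc (0 : ℝ) M, ∀ y ∈ Set.Icc (0 : ℝ) M,
        ‖g x - g y‖ ≤ (α / ξ₁ * max 1 M + 2 * β / (ξ₁ * (1 - ξ₂)) * max 1 (1 / M))
          * |x - y| ^ (1 / s) := by
  classical
  have hξ₂0 : 0 < ξ₂ := lt_of_lt_of_le hξ₁ hξ
  have h1ξ : 0 < 1 - ξ₂ := by linarith
  have hξ₁1 : ξ₁ ≤ 1 := le_of_lt (lt_of_le_of_lt hξ hξ₂)
  have hs0 : (0:ℝ) < s := by linarith
  -- geometric decay of the scales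
  have hA : ∀ n : ℕ, ∀ j, j₀ ≤ j → ρ (j + n) ≤ ξ₂ ^ n * ρ j := by
    intro n
    induction n with
    | zero => intro j hj; simp
    | succ n ih =>
      intro j hj
      have e : (j + ((n:ℕ)+1 : ℕ) : ℤ) = (j + n) + 1 := by push_cast; ring
      rw [e]
      have h1 : ρ (j + n + 1) ≤ ξ₂ * ρ (j + n) := (hρ (j + n) (by omega)).2
      have h2 := ih j hj
      calc ρ (j + n + 1) ≤ ξ₂ * ρ (j + n) := h1
        _ ≤ ξ₂ * (ξ₂ ^ n * ρ j) := mul_le_mul_of_nonneg_left h2 hξ₂0.le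
        _ = ξ₂ ^ (n+1) * ρ j := by ring
  -- telescoping bound between any two indices
  have hB : ∀ j, j₀ ≤ j → ∀ k, j ≤ k → ∀ x ∈ Set.Icc (0:ℝ) M,
      ‖f j x - f k x‖ ≤ β / (1 - ξ₂) * (ρ j - ρ k) := by
    intro j hj k
    refine Int.le_induction (motive := fun k _ => ∀ x ∈ Set.Icc (0:ℝ) M,
      ‖f j x - f k x‖ ≤ β / (1 - ξ₂) * (ρ j - ρ k)) ?_ ?_ k
    · intro x hx; simp
    · intro k hk ih x hx
      have h1 := hclose k (by omega) x hx
      have h2 := ih x hx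
      have h3 : ρ (k+1) ≤ ξ₂ * ρ k := (hρ k (by omega)).2
      have h4 : 0 < ρ k := hρpos k (by omega)
      have h5 : β / (1 - ξ₂) * ρ (k+1) ≤ β / (1 - ξ₂) * (ξ₂ * ρ k) :=
        mul_le_mul_of_nonneg_left h3 (by positivity)
      have h6 : β / (1 - ξ₂) * (ξ₂ * ρ k) = β / (1 - ξ₂) * ρ k - β * ρ k := by
        field_simp
        ring
      calc ‖f j x - f (k+1) x‖ ≤ ‖f j x - f k x‖ + ‖f k x - f (k+1) x‖ :=
            norm_sub_le_norm_sub_add_norm_sub _ _ _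
        _ ≤ β / (1 - ξ₂) * (ρ j - ρ k) + β * ρ k := by linarith
        _ ≤ β / (1 - ξ₂) * (ρ j - ρ (k+1)) := by
            rw [mul_sub, mul_sub]
            linarith
  have hB' : ∀ j, j₀ ≤ j → ∀ k, j ≤ k → ∀ x ∈ Set.Icc (0:ℝ) M,
      ‖f j x - f k x‖ ≤ β / (1 - ξ₂) * ρ j := by
    intro j hj k hk x hx
    have h1 := hB j hj k hk x hx
    have h2 : 0 < ρ k := hρpos k (by omega)
    have h3 : 0 ≤ β / (1 - ξ₂) := by positivity
    have h4 : β / (1 - ξ₂) * (ρ j - ρ k) ≤ β / (1 - ξ₂) * ρ j :=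
      mul_le_mul_of_nonneg_left (by linarith) h3
    linarith
  -- uniform Cauchy criterion
  have hcau : ∀ ε > (0:ℝ), ∃ N : ℤ, ∀ m ≥ N, ∀ n ≥ N, ∀ x ∈ Set.Icc (0:ℝ) M,
      dist (f m x) (f n x) < ε := by
    intro ε hε
    have htend : Filter.Tendsto (fun n : ℕ => β / (1 - ξ₂) * ξ₂ ^ n)
        Filter.atTop (nhds 0) := by
      have := tendsto_pow_atTop_nhds_zero_of_lt_one hξ₂0.le hξ₂
      simpa using this.const_mul (β / (1 - ξ₂))
    obtain ⟨n₀, hn₀⟩ := (htend.eventually (gt_mem_nhds hε)).exists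
    refine ⟨j₀ + n₀, ?_⟩
    have key : ∀ m n : ℤ, j₀ + n₀ ≤ m → m ≤ n → ∀ x ∈ Set.Icc (0:ℝ) M,
        dist (f m x) (f n x) < ε := by
      intro m n hm hmn x hx
      have hjm : j₀ ≤ m := by omega
      rw [dist_eq_norm]
      have h1 := hB' m hjm n hmn x hx
      have h2 : ρ m ≤ ξ₂ ^ (m - j₀).toNat * ρ j₀ := by
        have := hA (m - j₀).toNat j₀ le_rfl
        have e : (j₀ + ((m - j₀).toNat : ℤ)) = m := by omega
        rwa [e] at this
      rw [hρ0, mul_one] at h2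
      have h3 : ξ₂ ^ (m - j₀).toNat ≤ ξ₂ ^ n₀ :=
        pow_le_pow_of_le_one hξ₂0.le hξ₂.le (by omega)
      have h4 : 0 ≤ β / (1 - ξ₂) := by positivity
      calc ‖f m x - f n x‖ ≤ β / (1 - ξ₂) * ρ m := h1
        _ ≤ β / (1 - ξ₂) * ξ₂ ^ n₀ := mul_le_mul_of_nonneg_left (le_trans h2 h3) h4
        _ < ε := hn₀
    intro m hm n hn x hx
    rcases le_total m n with h | h
    · exact key m n hm h x hx
    · rw [dist_comm]; exact key n m hn h x hx
  -- pointwise limit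
  set g : ℝ → X := fun x => Filter.limUnder Filter.atTop (fun j => f j x) with hgdef
  have hptcau : ∀ x ∈ Set.Icc (0:ℝ) M, CauchySeq (fun j : ℤ => f j x) := by
    intro x hx
    rw [Metric.cauchySeq_iff]
    intro ε hε
    obtain ⟨N, hN⟩ := hcau ε hε
    exact ⟨N, fun m hm n hn => hN m hm n hn x hx⟩
  have hg : ∀ x ∈ Set.Icc (0:ℝ) M,
      Filter.Tendsto (fun j : ℤ => f j x) Filter.atTop (nhds (g x)) :=
    fun x hx => (hptcau x hx).tendsto_limUnder
  have hUC : UniformCauchySeqOn (fun j x => f j x) Filter.atTop (Set.Icc (0:ℝ) M) :=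
    Metric.uniformCauchySeqOn_iff.mpr hcau
  refine ⟨g, hUC.tendstoUniformlyOn_of_tendsto hg, ?_⟩
  -- distance from f j to the limit
  have hgf : ∀ j, j₀ ≤ j → ∀ x ∈ Set.Icc (0:ℝ) M,
      ‖f j x - g x‖ ≤ β / (1 - ξ₂) * ρ j := by
    intro j hj x hx
    have t1 : Filter.Tendsto (fun k : ℤ => ‖f j x - f k x‖) Filter.atTop
        (nhds ‖f j x - g x‖) := ((hg x hx).const_sub _).norm
    refine le_of_tendsto t1 ?_
    filter_upwards [Filter.eventually_ge_atTop j] with k hk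
    exact hB' j hj k hk x hx
  -- Hölder estimate
  intro x hx y hy
  rcases eq_or_ne x y with rfl | hxy
  · simp
    positivity
  set t := |x - y| with htdef
  have ht : 0 < t := abs_pos.mpr (sub_ne_zero.mpr hxy)
  have htM : t ≤ M := by
    rw [htdef, abs_sub_le_iff]
    obtain ⟨hx1, hx2⟩ := hx; obtain ⟨hy1, hy2⟩ := hy
    constructor <;> linarith
  set r := t ^ (1/s) with hrdef
  have hr : 0 < r := Real.rpow_pos_of_pos ht _
  have h1s : 0 < 1/s := by positivity
  have h1s' : 1/s ≤ 1 := by rw [div_le_one hs0]; linarith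
  -- choice of a good scale
  have hkey : ∃ j, j₀ ≤ j ∧ ρ j ≤ max 1 (1/M) * r / ξ₁ ∧
      ρ j ^ (1-s) * t ≤ max 1 M / ξ₁ * r := by
    rcases le_or_gt 1 t with h1t | h1t
    · -- large increments: use the initial scale
      refine ⟨j₀, le_rfl, ?_, ?_⟩
      · have hr1 : 1 ≤ r := Real.one_le_rpow h1t h1s.le
        have hmax : (1:ℝ) ≤ max 1 (1/M) := le_max_left _ _
        rw [hρ0, le_div_iff₀ hξ₁]
        nlinarith
      · rw [hρ0, Real.one_rpow, one_mul]
        have hM1 : 1 ≤ M := le_trans h1t htM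
        have e1 : t = r * t ^ (1 - 1/s) := by
          rw [hrdef, ← Real.rpow_add ht, show 1/s + (1 - 1/s) = 1 by ring,
            Real.rpow_one]
        have e2 : t ^ (1 - 1/s) ≤ M ^ (1 - 1/s) :=
          Real.rpow_le_rpow ht.le htM (by linarith)
        have e3 : M ^ (1 - 1/s) ≤ M ^ (1:ℝ) :=
          Real.rpow_le_rpow_of_exponent_le hM1 (by linarith)
        rw [Real.rpow_one] at e3
        have hmax : M ≤ max 1 M := le_max_right _ _
        have hmax2 : max 1 M ≤ max 1 M / ξ₁ := by
          rw [le_div_iff₀ hξ₁]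
          nlinarith [le_max_left (1:ℝ) M]
        calc t = r * t ^ (1 - 1/s) := e1
          _ ≤ r * M := mul_le_mul_of_nonneg_left (e2.trans e3) hr.le
          _ = M * r := mul_comm _ _
          _ ≤ max 1 M / ξ₁ * r :=
              mul_le_mul_of_nonneg_right (hmax.trans hmax2) hr.le
    · -- small increments: find the right scale
      have hr1 : r < 1 := Real.rpow_lt_one ht.le h1t h1s
      obtain ⟨n₁, hn₁⟩ := exists_pow_lt_of_lt_one hr hξ₂
      have hex : ∃ n : ℕ, ρ (j₀ + n) ≤ r := by
        refine ⟨n₁, ?_⟩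
        have := hA n₁ j₀ le_rfl
        rw [hρ0, mul_one] at this
        linarith
      obtain ⟨n, hn, hnmin⟩ := exists_min_nat hex
      have hn0 : n ≠ 0 := by
        intro h
        rw [h] at hn
        simp only [Nat.cast_zero, add_zero] at hn
        rw [hρ0] at hn; linarith
      have hprev : ¬ ρ (j₀ + ((n-1 : ℕ) : ℤ)) ≤ r := hnmin (n-1) (by omega)
      set j := j₀ + ((n-1 : ℕ) : ℤ) with hjdef
      have hjj₀ : j₀ ≤ j := by omega
      have hjr : r < ρ j := not_le.mp hprev
      have hsucc : j + 1 = j₀ + (n : ℤ) := by omega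
      have hρj1 : ξ₁ * ρ j ≤ r := by
        have := (hρ j hjj₀).1
        rw [hsucc] at this
        linarith
      refine ⟨j, hjj₀, ?_, ?_⟩
      · rw [le_div_iff₀ hξ₁]
        have : (1:ℝ) * r ≤ max 1 (1/M) * r :=
          mul_le_mul_of_nonneg_right (le_max_left _ _) hr.le
        rw [mul_comm]
        linarith
      · have c1 : ρ j ^ (1-s) ≤ r ^ (1-s) :=
          Real.rpow_le_rpow_of_nonpos hr hjr.le (by linarith)
        have c2 : r ^ (1-s) * t = r := by
          have e : t ^ (1/s * (1-s)) * t ^ (1:ℝ) = t ^ (1/s) := by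
            rw [← Real.rpow_add ht]
            congr 1
            field_simp
            ring
          calc r ^ (1-s) * t = t ^ (1/s * (1-s)) * t ^ (1:ℝ) := by
                rw [hrdef, ← Real.rpow_mul ht.le, Real.rpow_one]
            _ = t ^ (1/s) := e
            _ = r := hrdef.symm
        have c3 : (1:ℝ) ≤ max 1 M / ξ₁ := by
          rw [le_div_iff₀ hξ₁]
          nlinarith [le_max_left (1:ℝ) M]
        calc ρ j ^ (1-s) * t ≤ r ^ (1-s) * t := mul_le_mul_of_nonneg_right c1 ht.le
          _ = r := c2
          _ = 1 * r := (one_mul r).symm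
          _ ≤ max 1 M / ξ₁ * r := mul_le_mul_of_nonneg_right c3 hr.le
  obtain ⟨j, hjj₀, hc1, hc2⟩ := hkey
  have hd1 : ‖f j x - g x‖ ≤ β / (1 - ξ₂) * ρ j := hgf j hjj₀ x hx
  have hd2 : ‖f j y - g y‖ ≤ β / (1 - ξ₂) * ρ j := hgf j hjj₀ y hy
  have hd3 : ‖f j x - f j y‖ ≤ α * (ρ j ^ (1-s) * t) := by
    have := hLip j hjj₀ x hx y hy
    rw [← mul_assoc]
    exact this
  have e0 : ‖g x - g y‖ ≤ ‖f j x - g x‖ + ‖f j x - f j y‖ + ‖f j y - g y‖ := by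
    have e : g x - g y = -(f j x - g x) + (f j x - f j y) + (f j y - g y) := by abel
    rw [e]
    calc ‖-(f j x - g x) + (f j x - f j y) + (f j y - g y)‖
        ≤ ‖-(f j x - g x) + (f j x - f j y)‖ + ‖f j y - g y‖ := norm_add_le _ _
      _ ≤ ‖-(f j x - g x)‖ + ‖f j x - f j y‖ + ‖f j y - g y‖ := by
          have := norm_add_le (-(f j x - g x)) (f j x - f j y); linarith
      _ = ‖f j x - g x‖ + ‖f j x - f j y‖ + ‖f j y - g y‖ := by rw [norm_neg]
  calc ‖g x - g y‖
      ≤ β / (1 - ξ₂) * ρ j + α * (ρ j ^ (1-s) * t) + β / (1 - ξ₂) * ρ j := by linarith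
    _ ≤ β / (1 - ξ₂) * (max 1 (1/M) * r / ξ₁) + α * (max 1 M / ξ₁ * r)
        + β / (1 - ξ₂) * (max 1 (1/M) * r / ξ₁) := by gcongr
    _ = (α / ξ₁ * max 1 M + 2 * β / (ξ₁ * (1 - ξ₂)) * max 1 (1/M)) * r := by
        field_simp
        ring
end

section
/- Let $s > 1$ and $N \geq 2$. There exists a compact, countable set $E \subset \mathbb{R}^N$ with a single accumulation point that is not contained in the image of any $(1/s)$-Hölder continuous map $f : [0,1] \to \mathbb{R}^N$ for any $s \in [1, N)$. In particular, the construction $E = \{(0,\dots,0,2A)\} \cup \bigcup_{k=0}^\infty \phi_k(\mathcal{G}_k)$, where $\mathcal{G}_k$ is the set of $(2^k+1)^N$ dyadic lattice points of spacing $2^{-k}$ in $[0,1]^N$ and $\phi_k(x) = (k+1)^{-2} x + (0,\dots,0, 2\sum_{i=1}^k i^{-2})$ with $A = \pi^2/6$, has this property. -/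
open Metric Filter Finset

namespace HolderCE

noncomputable def cc (k : ℕ) : ℝ := (((k : ℝ) + 1) ^ 2)⁻¹

lemma cc_pos (k : ℕ) : 0 < cc k := by unfold cc; positivity

lemma summable_cc : Summable cc := by
  have := Real.summable_one_div_nat_pow (p := 2) |>.mpr (by norm_num)
  have h2 := (summable_nat_add_iff 1).mpr this
  refine h2.congr fun n => ?_
  simp only [cc, one_div]
  push_cast
  ring_nf

noncomputable def bb (k : ℕ) : ℝ := 2 * ∑ i ∈ Finset.range k, cc i
noncomputable def A2 : ℝ := 2 * ∑' i, cc i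
noncomputable def tt (k : ℕ) : ℝ := A2 - bb k

lemma tt_eq (k : ℕ) : tt k = 2 * ∑' i, cc (i + k) := by
  have h := Summable.sum_add_tsum_nat_add (f := cc) k summable_cc
  unfold tt bb A2
  linarith

lemma two_cc_le_tt (k : ℕ) : 2 * cc k ≤ tt k := by
  rw [tt_eq]
  have hsum : Summable fun i => cc (i + k) := (summable_nat_add_iff k).mpr summable_cc
  have h := Summable.le_tsum hsum 0 (fun j _ => (cc_pos _).le)
  simp only [zero_add] at h
  linarith

lemma cc_le_tt (k : ℕ) : cc k ≤ tt k := le_trans (by nlinarith [cc_pos k]) (two_cc_le_tt k)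

lemma tt_pos (k : ℕ) : 0 < tt k := by
  have := two_cc_le_tt k; have := cc_pos k; linarith

lemma bb_nonneg (k : ℕ) : 0 ≤ bb k := by
  unfold bb
  have h : (0:ℝ) ≤ ∑ i ∈ Finset.range k, cc i :=
    Finset.sum_nonneg fun i _ => (cc_pos i).le
  linarith

lemma tt_le_tt0 (k : ℕ) : tt k ≤ tt 0 := by
  have h : bb 0 = 0 := by simp [bb]
  have : 0 ≤ bb k := bb_nonneg k
  unfold tt; rw [h]; linarith

lemma tt_tendsto : Tendsto tt atTop (nhds 0) := by
  have h : Tendsto bb atTop (nhds A2) := by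
    have := (summable_cc.hasSum.tendsto_sum_nat).const_mul 2
    exact this
  have := (tendsto_const_nhds (x := A2) (f := atTop)).sub h
  show Tendsto (fun x => A2 - bb x) atTop (nhds 0)
  simpa using this

lemma growth {r C : ℝ} (hr : 1 < r) (hC : 0 ≤ C) (m : ℕ) :
    ∃ k : ℕ, C * ((k : ℝ) + 1) ^ m + 1 < r ^ k := by
  have hr0 : (0 : ℝ) < r := by linarith
  have hq : |r⁻¹| < 1 := by
    rw [abs_of_pos (by positivity)]; exact inv_lt_one_of_one_lt₀ hr
  have h0 := tendsto_pow_const_mul_const_pow_of_abs_lt_one m hq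
  have h1 : Tendsto (fun k : ℕ => ((k : ℝ) + 1) ^ m * r⁻¹ ^ (k + 1)) atTop (nhds 0) := by
    have := h0.comp (tendsto_add_atTop_nat 1)
    refine this.congr fun k => ?_
    simp [Function.comp]
  have hpos : 0 < ((C + 1) * r)⁻¹ := by positivity
  obtain ⟨k, hk⟩ := (h1.eventually (gt_mem_nhds hpos)).exists
  refine ⟨k, ?_⟩
  have hrk : (0 : ℝ) < r ^ k := by positivity
  have hmpos : (0:ℝ) < ((k : ℝ) + 1) ^ m := by positivity
  have h2 : ((k : ℝ) + 1) ^ m * r⁻¹ ^ (k + 1) * ((C + 1) * r) < 1 := by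
    calc ((k : ℝ) + 1) ^ m * r⁻¹ ^ (k + 1) * ((C + 1) * r)
        < ((C + 1) * r)⁻¹ * ((C + 1) * r) := by
          apply mul_lt_mul_of_pos_right hk (by positivity)
      _ = 1 := inv_mul_cancel₀ (by positivity)
  have h4 : (C + 1) * ((k : ℝ) + 1) ^ m / r ^ k < 1 := by
    have e : (C + 1) * ((k : ℝ) + 1) ^ m / r ^ k
        = ((k : ℝ) + 1) ^ m * r⁻¹ ^ (k + 1) * ((C + 1) * r) := by
      rw [inv_pow]
      field_simp [pow_succ]
      ring
    rw [e]; exact h2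
  have h5 : (C + 1) * ((k : ℝ) + 1) ^ m < r ^ k := (div_lt_one hrk).mp h4
  have h6 : (1 : ℝ) ≤ ((k : ℝ) + 1) ^ m := one_le_pow₀ (by linarith [Nat.cast_nonneg (α := ℝ) k])
  nlinarith


lemma exists_k (N : ℕ) (s Hc : ℝ) (hs1 : 1 ≤ s) (hsN : s < N) (hH : 0 ≤ Hc) :
    ∃ k : ℕ, Hc ^ s * ((((k : ℝ) + 1) ^ 2 * 2 ^ k) ^ s) + 1 < ((2 : ℝ) ^ k) ^ N := by
  have hs0 : (0:ℝ) < s := by linarith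
  set r := (2 : ℝ) ^ ((N : ℝ) - s) with hrdef
  have hNs : (0:ℝ) < (N : ℝ) - s := by linarith
  have hr1 : 1 < r := by
    rw [hrdef]
    exact (Real.one_lt_rpow_iff_of_pos (by norm_num)).mpr (Or.inl ⟨one_lt_two, hNs⟩)
  obtain ⟨k, hk⟩ := growth hr1 (Real.rpow_nonneg hH s) (2 * N)
  refine ⟨k, ?_⟩
  have h2k : (1 : ℝ) ≤ 2 ^ k := one_le_pow₀ one_le_two
  have hk1 : (1:ℝ) ≤ (k : ℝ) + 1 := by linarith [Nat.cast_nonneg (α := ℝ) k]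
  have hP1 : (1 : ℝ) ≤ ((2 : ℝ) ^ k) ^ s := Real.one_le_rpow h2k hs0.le
  have hP0 : (0 : ℝ) < ((2 : ℝ) ^ k) ^ s := by linarith
  have e1 : ((((k : ℝ) + 1) ^ 2 * 2 ^ k) ^ s)
      = (((k : ℝ) + 1) ^ 2) ^ s * ((2 : ℝ) ^ k) ^ s :=
    Real.mul_rpow (by positivity) (by positivity)
  have e2 : (((k : ℝ) + 1) ^ 2) ^ s ≤ ((k : ℝ) + 1) ^ (2 * N) := by
    have hB : (1:ℝ) ≤ ((k : ℝ) + 1) ^ 2 := one_le_pow₀ hk1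
    calc (((k : ℝ) + 1) ^ 2) ^ s ≤ (((k : ℝ) + 1) ^ 2) ^ (N : ℝ) :=
          Real.rpow_le_rpow_of_exponent_le hB (by linarith)
      _ = (((k : ℝ) + 1) ^ 2) ^ (N : ℕ) := Real.rpow_natCast _ N
      _ = ((k : ℝ) + 1) ^ (2 * N) := by rw [← pow_mul]
  have e3 : ((2 : ℝ) ^ k) ^ s * r ^ k = ((2 : ℝ) ^ k) ^ N := by
    have ea : ((2 : ℝ) ^ k) ^ s = (2 : ℝ) ^ ((k : ℝ) * s) := by
      rw [← Real.rpow_natCast 2 k, ← Real.rpow_mul (by norm_num)]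
    have eb : r ^ k = (2 : ℝ) ^ (((N : ℝ) - s) * (k : ℝ)) := by
      rw [← Real.rpow_natCast r k, hrdef, ← Real.rpow_mul (by norm_num)]
    rw [ea, eb, ← Real.rpow_add (by norm_num)]
    have : (k : ℝ) * s + ((N : ℝ) - s) * (k : ℝ) = ((k * N : ℕ) : ℝ) := by push_cast; ring
    rw [this, Real.rpow_natCast, pow_mul]
  calc Hc ^ s * ((((k : ℝ) + 1) ^ 2 * 2 ^ k) ^ s) + 1
      ≤ Hc ^ s * (((k : ℝ) + 1) ^ (2 * N)) * (((2 : ℝ) ^ k) ^ s)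
        + 1 * (((2 : ℝ) ^ k) ^ s) := by
        rw [e1]
        have := Real.rpow_nonneg hH s
        nlinarith [mul_le_mul_of_nonneg_left e2 this]
    _ = (Hc ^ s * ((k : ℝ) + 1) ^ (2 * N) + 1) * (((2 : ℝ) ^ k) ^ s) := by ring
    _ < r ^ k * (((2 : ℝ) ^ k) ^ s) := by
        apply mul_lt_mul_of_pos_right _ hP0
        exact hk
    _ = ((2 : ℝ) ^ k) ^ N := by rw [mul_comm]; exact e3

section Geometry

variable {N : ℕ}

lemma coord_le_dist (x y : EuclideanSpace ℝ (Fin N)) (i : Fin N) :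
    |x i - y i| ≤ dist x y := by
  rw [EuclideanSpace.dist_eq]
  have h1 : dist (x i) (y i) ^ 2 ≤ ∑ j, dist (x j) (y j) ^ 2 :=
    Finset.single_le_sum (f := fun j => dist (x j) (y j) ^ 2)
      (fun j _ => sq_nonneg _) (Finset.mem_univ i)
  calc |x i - y i| = Real.sqrt (dist (x i) (y i) ^ 2) := by
        rw [Real.sqrt_sq dist_nonneg, Real.dist_eq]
    _ ≤ _ := Real.sqrt_le_sqrt h1

lemma dist_le_of_coords {x y : EuclideanSpace ℝ (Fin N)} {c : ℝ} (hc : 0 ≤ c)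
    (h : ∀ i, |x i - y i| ≤ c) : dist x y ≤ Real.sqrt N * c := by
  rw [EuclideanSpace.dist_eq]
  have hsum : ∑ i, dist (x i) (y i) ^ 2 ≤ (N : ℝ) * c ^ 2 := by
    calc ∑ i, dist (x i) (y i) ^ 2 ≤ ∑ _i : Fin N, c ^ 2 :=
          Finset.sum_le_sum (fun i _ => by
            have hi := h i
            rw [Real.dist_eq]
            nlinarith [abs_nonneg (x i - y i)])
      _ = (N : ℝ) * c ^ 2 := by simp [Finset.sum_const]
  calc Real.sqrt (∑ i, dist (x i) (y i) ^ 2) ≤ Real.sqrt ((N : ℝ) * c ^ 2) :=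
        Real.sqrt_le_sqrt hsum
    _ = Real.sqrt N * c := by
        rw [Real.sqrt_mul (Nat.cast_nonneg N), Real.sqrt_sq hc]

noncomputable def aa (N : ℕ) : EuclideanSpace ℝ (Fin N) :=
  WithLp.toLp 2 (fun i => if (i : ℕ) = N - 1 then A2 else 0)

noncomputable def gg (N k : ℕ) (v : Fin N → Fin (2 ^ k + 1)) : EuclideanSpace ℝ (Fin N) :=
  WithLp.toLp 2 (fun i => cc k * ((v i : ℕ) : ℝ) / 2 ^ k + (if (i : ℕ) = N - 1 then bb k else 0))

def EE (N : ℕ) : Set (EuclideanSpace ℝ (Fin N)) := {aa N} ∪ ⋃ k, Set.range (gg N k)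

lemma vval_le {k : ℕ} (v : Fin (2 ^ k + 1)) : ((v : ℕ) : ℝ) ≤ 2 ^ k := by
  have := v.is_lt
  exact_mod_cast Nat.lt_succ_iff.mp this

lemma q_mem {k : ℕ} (v : Fin (2 ^ k + 1)) :
    0 ≤ ((v : ℕ) : ℝ) / 2 ^ k ∧ ((v : ℕ) : ℝ) / 2 ^ k ≤ 1 := by
  constructor
  · positivity
  · rw [div_le_one (by positivity)]; exact vval_le v

lemma gg_coord_bound {k : ℕ} (v : Fin N → Fin (2 ^ k + 1)) (i : Fin N) :
    |gg N k v i - aa N i| ≤ tt k := by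
  obtain ⟨hq0, hq1⟩ := q_mem (v i)
  have hck := cc_pos k
  have hct := two_cc_le_tt k
  have htp := tt_pos k
  have hcq0 : 0 ≤ cc k * (((v i : ℕ) : ℝ) / 2 ^ k) := by positivity
  have hcq1 : cc k * (((v i : ℕ) : ℝ) / 2 ^ k) ≤ cc k := by nlinarith
  show |cc k * ((v i : ℕ) : ℝ) / 2 ^ k + (if (i : ℕ) = N - 1 then bb k else 0)
      - (if (i : ℕ) = N - 1 then A2 else 0)| ≤ tt k
  by_cases hi : (i : ℕ) = N - 1 <;> simp only [hi, if_pos, if_true, if_neg, if_false] <;>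
    rw [abs_le] <;> constructor <;>
    · unfold tt at *
      rw [mul_div_assoc] at *
      nlinarith


lemma dist_gg_aa_le {k : ℕ} (v : Fin N → Fin (2 ^ k + 1)) :
    dist (gg N k v) (aa N) ≤ Real.sqrt N * tt k :=
  dist_le_of_coords (tt_pos k).le (gg_coord_bound v)

lemma cc_le_dist_gg_aa (hN : 1 ≤ N) {k : ℕ} (v : Fin N → Fin (2 ^ k + 1)) :
    cc k ≤ dist (gg N k v) (aa N) := by
  set i : Fin N := ⟨N - 1, by omega⟩ with hidef
  have hi : (i : ℕ) = N - 1 := rfl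
  obtain ⟨hq0, hq1⟩ := q_mem (v i)
  have hck := cc_pos k
  have hct := two_cc_le_tt k
  have hcq1 : cc k * (((v i : ℕ) : ℝ) / 2 ^ k) ≤ cc k := by nlinarith
  have hcq0 : 0 ≤ cc k * (((v i : ℕ) : ℝ) / 2 ^ k) := by positivity
  have hco : gg N k v i - aa N i = cc k * (((v i : ℕ) : ℝ) / 2 ^ k) - tt k := by
    show cc k * ((v i : ℕ) : ℝ) / 2 ^ k + (if (i : ℕ) = N - 1 then bb k else 0)
      - (if (i : ℕ) = N - 1 then A2 else 0) = _
    rw [if_pos hi, if_pos hi]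
    unfold tt
    ring
  have h1 : cc k ≤ |gg N k v i - aa N i| := by
    rw [hco, abs_sub_comm, abs_of_nonneg (by linarith)]
    linarith
  exact le_trans h1 (coord_le_dist _ _ i)

lemma aa_ne_gg (hN : 1 ≤ N) {k : ℕ} (v : Fin N → Fin (2 ^ k + 1)) :
    gg N k v ≠ aa N := by
  intro h
  have := cc_le_dist_gg_aa hN v
  rw [h, dist_self] at this
  exact absurd this (not_le.mpr (cc_pos k))

lemma gg_sep {k : ℕ} {v w : Fin N → Fin (2 ^ k + 1)} (hvw : v ≠ w) :
    cc k / 2 ^ k ≤ dist (gg N k v) (gg N k w) := by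
  obtain ⟨i, hi⟩ := Function.ne_iff.mp hvw
  have hco : gg N k v i - gg N k w i
      = cc k * (((v i : ℕ) : ℝ) - ((w i : ℕ) : ℝ)) / 2 ^ k := by
    show cc k * ((v i : ℕ) : ℝ) / 2 ^ k + (if (i : ℕ) = N - 1 then bb k else 0)
      - (cc k * ((w i : ℕ) : ℝ) / 2 ^ k + (if (i : ℕ) = N - 1 then bb k else 0)) = _
    ring
  have hone : (1 : ℝ) ≤ |((v i : ℕ) : ℝ) - ((w i : ℕ) : ℝ)| := by
    have hne : (v i : ℕ) ≠ (w i : ℕ) := fun h => hi (Fin.ext h)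
    have h0 : ((v i : ℕ) : ℤ) - ((w i : ℕ) : ℤ) ≠ 0 := by
      intro h; apply hne; omega
    have h1 : (1 : ℤ) ≤ |((v i : ℕ) : ℤ) - ((w i : ℕ) : ℤ)| := Int.one_le_abs h0
    have h2 : ((1 : ℤ) : ℝ) ≤ ((|((v i : ℕ) : ℤ) - ((w i : ℕ) : ℤ)| : ℤ) : ℝ) := by
      exact_mod_cast h1
    push_cast at h2
    exact h2
  have hck := cc_pos k
  have h2 : cc k / 2 ^ k ≤ |gg N k v i - gg N k w i| := by
    rw [hco, abs_div, abs_of_pos (show (0:ℝ) < (2:ℝ)^k by positivity), abs_mul,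
      abs_of_pos hck]
    apply div_le_div_of_nonneg_right ?_ (by positivity)
    nlinarith
  exact le_trans h2 (coord_le_dist _ _ i)

lemma EE_countable : (EE N).Countable :=
  (Set.countable_singleton _).union
    (Set.countable_iUnion fun _ => (Set.finite_range _).countable)

lemma EE_subset (d : ℝ) (hd : 0 < d) {K : ℕ}
    (hK : ∀ k, K ≤ k → Real.sqrt N * tt k ≤ d) :
    EE N ⊆ ({aa N} ∪ ⋃ k ∈ Finset.range K, Set.range (gg N k)) ∪ closedBall (aa N) d := by
  rintro y (hy | hy)
  · exact Or.inl (Or.inl hy)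
  · obtain ⟨k, hk⟩ := Set.mem_iUnion.mp hy
    by_cases hkK : k < K
    · exact Or.inl (Or.inr (Set.mem_biUnion (Finset.mem_range.mpr hkK) hk))
    · obtain ⟨v, rfl⟩ := hk
      refine Or.inr (mem_closedBall.mpr ?_)
      exact le_trans (dist_gg_aa_le v) (hK k (by omega))

lemma finite_F (K : ℕ) :
    (({aa N} ∪ ⋃ k ∈ Finset.range K, Set.range (gg N k)) : Set (EuclideanSpace ℝ (Fin N))).Finite :=
  (Set.finite_singleton _).union
    (Set.Finite.biUnion (Finset.range K).finite_toSet fun _ _ => Set.finite_range _)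

lemma F_subset_EE (K : ℕ) :
    (({aa N} ∪ ⋃ k ∈ Finset.range K, Set.range (gg N k)) : Set (EuclideanSpace ℝ (Fin N)))
      ⊆ EE N := by
  rintro y (hy | hy)
  · exact Or.inl hy
  · obtain ⟨k, _, hk⟩ := Set.mem_iUnion₂.mp hy
    exact Or.inr (Set.mem_iUnion.mpr ⟨k, hk⟩)

lemma eventually_small (d : ℝ) (hd : 0 < d) :
    ∃ K : ℕ, ∀ k, K ≤ k → Real.sqrt (N : ℝ) * tt k ≤ d := by
  have h : Tendsto (fun k => Real.sqrt (N : ℝ) * tt k) atTop (nhds 0) := by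
    have := tt_tendsto.const_mul (Real.sqrt (N : ℝ))
    simpa [mul_comm] using this
  obtain ⟨K, hK⟩ := eventually_atTop.mp (h.eventually (gt_mem_nhds hd))
  exact ⟨K, fun k hk => (hK k hk).le⟩

lemma EE_closed : IsClosed (EE N) := by
  apply isClosed_of_closure_subset
  intro x hx
  by_cases hxa : x = aa N
  · exact Or.inl hxa
  · have hd : 0 < dist x (aa N) := dist_pos.mpr hxa
    obtain ⟨K, hK⟩ := eventually_small (N := N) (dist x (aa N) / 2) (by linarith)
    have hsub : EE N ⊆ ({aa N} ∪ ⋃ k ∈ Finset.range K, Set.range (gg N k))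
        ∪ closedBall (aa N) (dist x (aa N) / 2) :=
      EE_subset _ (by linarith) hK
    have hcl : IsClosed (({aa N} ∪ ⋃ k ∈ Finset.range K, Set.range (gg N k))
        ∪ closedBall (aa N) (dist x (aa N) / 2)) :=
      ((finite_F K).isClosed).union isClosed_closedBall
    have hx2 := (closure_minimal hsub hcl) hx
    rcases hx2 with hx2 | hx2
    · exact F_subset_EE K hx2
    · exfalso
      rw [mem_closedBall] at hx2
      linarith



lemma EE_bounded : Bornology.IsBounded (EE N) := by
  apply (Metric.isBounded_closedBall (x := aa N) (r := Real.sqrt N * tt 0)).subset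
  rintro y (hy | hy)
  · rw [hy, mem_closedBall, dist_self]
    have h1 : (0:ℝ) ≤ Real.sqrt N := Real.sqrt_nonneg _
    nlinarith [tt_pos 0]
  · obtain ⟨k, v, rfl⟩ := Set.mem_iUnion.mp hy
    rw [mem_closedBall]
    refine le_trans (dist_gg_aa_le v) ?_
    have h1 : (0:ℝ) ≤ Real.sqrt N := Real.sqrt_nonneg _
    nlinarith [tt_le_tt0 k, tt_pos k]

lemma EE_compact : IsCompact (EE N) :=
  Metric.isCompact_of_isClosed_isBounded EE_closed EE_bounded

lemma aa_mem_EE : aa N ∈ EE N := Or.inl rfl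

lemma gg_mem_EE {k : ℕ} (v : Fin N → Fin (2 ^ k + 1)) : gg N k v ∈ EE N :=
  Or.inr (Set.mem_iUnion.mpr ⟨k, Set.mem_range_self v⟩)

lemma accPt_aa (hN : 1 ≤ N) : AccPt (aa N) (Filter.principal (EE N)) := by
  rw [accPt_iff_nhds]
  intro U hU
  obtain ⟨ε, hε, hball⟩ := Metric.mem_nhds_iff.mp hU
  obtain ⟨K, hK⟩ := eventually_small (N := N) (ε / 2) (by linarith)
  refine ⟨gg N K (fun _ => 0), ⟨hball ?_, gg_mem_EE _⟩, aa_ne_gg hN _⟩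
  rw [mem_ball]
  exact lt_of_le_of_lt (le_trans (dist_gg_aa_le _) (hK K le_rfl)) (by linarith)

lemma not_accPt (hN : 1 ≤ N) {x : EuclideanSpace ℝ (Fin N)} (hxa : x ≠ aa N) :
    ¬ AccPt x (Filter.principal (EE N)) := by
  rw [accPt_iff_nhds]
  push_neg
  have hd : 0 < dist x (aa N) := dist_pos.mpr hxa
  obtain ⟨K, hK⟩ := eventually_small (N := N) (dist x (aa N) / 2) (by linarith)
  set F := (({aa N} ∪ ⋃ k ∈ Finset.range K, Set.range (gg N k)) :
    Set (EuclideanSpace ℝ (Fin N))) with hF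
  have hsub : EE N ⊆ F ∪ closedBall (aa N) (dist x (aa N) / 2) :=
    EE_subset _ (by linarith) hK
  have hFfin : (F \ {x}).Finite := (finite_F K).diff
  have hxF : x ∉ F \ {x} := fun h => h.2 rfl
  have hopen : IsOpen (F \ {x})ᶜ := hFfin.isClosed.isOpen_compl
  refine ⟨ball x (dist x (aa N) / 2) ∩ (F \ {x})ᶜ, ?_, ?_⟩
  · exact Filter.inter_mem (ball_mem_nhds x (by linarith)) (hopen.mem_nhds hxF)
  · rintro y ⟨⟨hy1, hy2⟩, hy3⟩
    rcases hsub hy3 with h | h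
    · by_contra hne
      exact hy2 ⟨h, hne⟩
    · exfalso
      rw [mem_closedBall] at h
      rw [mem_ball] at hy1
      have := dist_triangle x y (aa N)
      rw [dist_comm x y] at this
      linarith

lemma acc_set (hN : 1 ≤ N) :
    {x | AccPt x (Filter.principal (EE N))} = {aa N} := by
  ext x
  simp only [Set.mem_setOf_eq, Set.mem_singleton_iff]
  constructor
  · intro h
    by_contra hxa
    exact not_accPt hN hxa h
  · rintro rfl
    exact accPt_aa hN

end Geometry

end HolderCE

open HolderCE Filter in
/-- There exists a compact, countable subset of `ℝ^N` with a single accumulation point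
which is not contained in the image of `[0,1]` under any `(1/s)`-Hölder map, for any
`s ∈ [1, N)`. -/
theorem exists_compact_countable_not_holder {N : ℕ} (hN : 2 ≤ N) :
    ∃ E : Set (EuclideanSpace ℝ (Fin N)),
      IsCompact E ∧ E.Countable ∧
      (∃ a : EuclideanSpace ℝ (Fin N), {x | AccPt x (Filter.principal E)} = {a}) ∧
      ∀ s : ℝ, 1 ≤ s → s < N →
        ∀ f : ℝ → EuclideanSpace ℝ (Fin N), ∀ H : ℝ,
          (∀ x ∈ Set.Icc (0 : ℝ) 1, ∀ y ∈ Set.Icc (0 : ℝ) 1,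
            dist (f x) (f y) ≤ H * |x - y| ^ (1 / s)) →
          ¬ E ⊆ f '' Set.Icc 0 1 := by
  have hN1 : 1 ≤ N := by omega
  refine ⟨EE N, EE_compact, EE_countable, ⟨aa N, acc_set hN1⟩, ?_⟩
  intro s hs1 hsN f H hf hsub
  have hs0 : (0:ℝ) < s := by linarith
  have hsNR : s < (N : ℝ) := hsN
  -- Step 1 : H is positive.
  have hH : 0 < H := by
    set v0 : Fin N → Fin (2 ^ 0 + 1) := fun _ => ⟨0, by norm_num⟩ with hv0
    set v1 : Fin N → Fin (2 ^ 0 + 1) := fun _ => ⟨1, by norm_num⟩ with hv1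
    have hvne : v0 ≠ v1 := by
      intro h
      have := congrFun h ⟨0, by omega⟩
      simp [hv0, hv1, Fin.ext_iff] at this
    obtain ⟨x0, hx0, hfx0⟩ := hsub (gg_mem_EE v0)
    obtain ⟨x1, hx1, hfx1⟩ := hsub (gg_mem_EE v1)
    have hsep := gg_sep (N := N) hvne
    have hcc0 : cc 0 = 1 := by norm_num [cc]
    rw [hcc0] at hsep
    norm_num at hsep
    rw [← hfx0, ← hfx1] at hsep
    have hHo := hf x0 hx0 x1 hx1
    have habs : |x0 - x1| ≤ 1 := by
      rw [abs_le]
      obtain ⟨h0a, h0b⟩ := hx0; obtain ⟨h1a, h1b⟩ := hx1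
      constructor <;> linarith
    have hq1 : |x0 - x1| ^ (1 / s) ≤ 1 :=
      Real.rpow_le_one (abs_nonneg _) habs (by positivity)
    have hq0 : 0 ≤ |x0 - x1| ^ (1 / s) := Real.rpow_nonneg (abs_nonneg _) _
    by_contra hc
    push_neg at hc
    nlinarith
  -- Step 2 : choose k violating the counting bound.
  obtain ⟨k, hk⟩ := exists_k N s H hs1 hsNR hH.le
  -- Step 3 : choose preimages.
  have hmem : ∀ v : Fin N → Fin (2 ^ k + 1), gg N k v ∈ f '' Set.Icc 0 1 :=
    fun v => hsub (gg_mem_EE v)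
  choose tv htv hftv using hmem
  set δ : ℝ := cc k / 2 ^ k with hδdef
  have hδ : 0 < δ := by have := cc_pos k; positivity
  set ε : ℝ := (δ / H) ^ s with hεdef
  have hε : 0 < ε := Real.rpow_pos_of_pos (div_pos hδ hH) s
  -- Step 4 : separation of preimages.
  have hsep : ∀ v w : Fin N → Fin (2 ^ k + 1), v ≠ w → ε ≤ |tv v - tv w| := by
    intro v w hvw
    have hd : δ ≤ dist (f (tv v)) (f (tv w)) := by
      rw [hftv, hftv]; exact gg_sep hvw
    have hHo := hf _ (htv v) _ (htv w)
    have h1 : δ / H ≤ |tv v - tv w| ^ (1 / s) := by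
      rw [div_le_iff₀' hH]
      linarith
    have h2 : (δ / H) ^ s ≤ (|tv v - tv w| ^ (1 / s)) ^ s :=
      Real.rpow_le_rpow (le_of_lt (div_pos hδ hH)) h1 hs0.le
    rwa [one_div, Real.rpow_inv_rpow (abs_nonneg _) (ne_of_gt hs0)] at h2
  -- Step 5 : the counting argument.
  have htv01 : ∀ v, 0 ≤ tv v ∧ tv v ≤ 1 := fun v => ⟨(htv v).1, (htv v).2⟩
  have hinj : Function.Injective
      (fun v : Fin N → Fin (2 ^ k + 1) =>
        (⟨⌊tv v / ε⌋₊, by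
          have h1 : tv v / ε ≤ 1 / ε := by
            have h2 := (htv v).2
            rw [div_le_div_iff₀ hε hε]
            nlinarith
          exact Nat.lt_succ_of_le (Nat.floor_le_floor h1)⟩ :
          Fin (⌊1 / ε⌋₊ + 1))) := by
    intro v w h
    by_contra hvw
    have hfl : ⌊tv v / ε⌋₊ = ⌊tv w / ε⌋₊ := by
      simpa [Fin.ext_iff] using h
    have hv0 : 0 ≤ tv v / ε := by have := (htv v).1; positivity
    have hw0 : 0 ≤ tv w / ε := by have := (htv w).1; positivity
    have h1 : tv v / ε < tv w / ε + 1 := by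
      calc tv v / ε < ⌊tv v / ε⌋₊ + 1 := Nat.lt_floor_add_one _
        _ = ⌊tv w / ε⌋₊ + 1 := by rw [hfl]
        _ ≤ tv w / ε + 1 := by linarith [Nat.floor_le hw0]
    have h2 : tv w / ε < tv v / ε + 1 := by
      calc tv w / ε < ⌊tv w / ε⌋₊ + 1 := Nat.lt_floor_add_one _
        _ = ⌊tv v / ε⌋₊ + 1 := by rw [hfl]
        _ ≤ tv v / ε + 1 := by linarith [Nat.floor_le hv0]
    have e1 : tv v / ε * ε = tv v := div_mul_cancel₀ _ (ne_of_gt hε)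
    have e2 : tv w / ε * ε = tv w := div_mul_cancel₀ _ (ne_of_gt hε)
    have m1 : tv v < tv w + ε := by
      have hm := mul_lt_mul_of_pos_right h1 hε
      rw [add_mul, one_mul, e1, e2] at hm
      exact hm
    have m2 : tv w < tv v + ε := by
      have hm := mul_lt_mul_of_pos_right h2 hε
      rw [add_mul, one_mul, e1, e2] at hm
      exact hm
    have hlt : |tv v - tv w| < ε := abs_lt.mpr ⟨by linarith, by linarith⟩
    exact absurd (hsep v w hvw) (not_le.mpr hlt)
  have hcard := Fintype.card_le_of_injective _ hinj
  simp only [Fintype.card_fun, Fintype.card_fin] at hcard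
  -- hcard : (2 ^ k + 1) ^ N ≤ ⌊1 / ε⌋₊ + 1
  have honeps : 1 / ε = H ^ s * (((k : ℝ) + 1) ^ 2 * 2 ^ k) ^ s := by
    have hδinv : δ⁻¹ = ((k : ℝ) + 1) ^ 2 * 2 ^ k := by
      rw [hδdef, cc]
      field_simp
    rw [hεdef, one_div, ← Real.inv_rpow (le_of_lt (div_pos hδ hH)), inv_div,
      div_eq_mul_inv, hδinv, Real.mul_rpow hH.le (by positivity)]
  have hc1 : ((2:ℝ) ^ k) ^ N ≤ (((2 ^ k + 1) ^ N : ℕ) : ℝ) := by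
    push_cast
    have h2k : (0:ℝ) ≤ 2 ^ k := by positivity
    exact pow_le_pow_left₀ h2k (by linarith) N
  have hc2 : (((⌊1 / ε⌋₊ + 1 : ℕ)) : ℝ) ≤ 1 / ε + 1 := by
    push_cast
    have := Nat.floor_le (le_of_lt (show (0:ℝ) < 1 / ε by positivity))
    linarith
  have hc3 : (((2 ^ k + 1) ^ N : ℕ) : ℝ) ≤ ((⌊1 / ε⌋₊ + 1 : ℕ) : ℝ) := by
    exact_mod_cast hcard
  have hk2 := hk
  rw [← honeps] at hk2
  linarith
end

section
/- Let $m, N \in \mathbb{N}$ with $1 \leq m \leq s < N$ for some real $s \in (1, N) \setminus \mathbb{N}$ with integer part $m$, and let $P_{N,m}$ be the polynomial of degree $m$ counting, for $n \in \mathbb{N}$, the number of subcubes of side $1/n$ in the partition of $[0,1]^N$ that intersect the $m$-skeleton of $\partial [0,1]^N$. Then for all sufficiently large $n$, $n^s - (n-2)^s < P_{N,m}(n) < n^s - 1$, and consequently there exists $\lambda \in (1/n, 1 - 2/n)$ with $P_{N,m}(n)\, n^{-s} + \lambda^s = 1$. -/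
open Finset Filter

private lemma aux_card_filter_lt (N m : ℕ) (h : m < N) :
    (Finset.univ.filter (fun i : Fin N => (i : ℕ) < m)).card = m := by
  have : (Finset.univ.filter (fun i : Fin N => (i : ℕ) < m)) = Finset.Iio (⟨m, h⟩ : Fin N) := by
    ext j
    simp [Fin.lt_def]
  rw [this, Fin.card_Iio]

private lemma aux_lower (N m n : ℕ) (hm : m < N) (hn : 1 ≤ n) :
    n ^ m ≤ (Finset.univ.filter (fun c : Fin N → Fin n =>
        N - m ≤ (Finset.univ.filter
          (fun i : Fin N => (c i : ℕ) = 0 ∨ (c i : ℕ) = n - 1)).card)).card := by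
  have hn0 : 0 < n := hn
  classical
  set f : (Fin m → Fin n) → (Fin N → Fin n) :=
    fun g i => if h : (i : ℕ) < m then g ⟨i, h⟩ else ⟨0, hn0⟩ with hf
  have hmaps : ∀ g : Fin m → Fin n, g ∈ (Finset.univ : Finset (Fin m → Fin n)) →
      f g ∈ (Finset.univ.filter (fun c : Fin N → Fin n =>
        N - m ≤ (Finset.univ.filter
          (fun i : Fin N => (c i : ℕ) = 0 ∨ (c i : ℕ) = n - 1)).card)) := by
    intro g _
    rw [Finset.mem_filter]
    refine ⟨Finset.mem_univ _, ?_⟩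
    have hsub : (Finset.univ.filter (fun i : Fin N => ¬ (i : ℕ) < m)) ⊆
        (Finset.univ.filter (fun i : Fin N => ((f g) i : ℕ) = 0 ∨ ((f g) i : ℕ) = n - 1)) := by
      intro i hi
      rw [Finset.mem_filter] at hi ⊢
      refine ⟨Finset.mem_univ _, Or.inl ?_⟩
      simp only [hf, dif_neg hi.2]
    have hcard : (Finset.univ.filter (fun i : Fin N => ¬ (i : ℕ) < m)).card = N - m := by
      have := Finset.card_filter_add_card_filter_not
        (s := (Finset.univ : Finset (Fin N))) (p := fun i : Fin N => (i : ℕ) < m)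
      rw [aux_card_filter_lt N m hm, Finset.card_univ, Fintype.card_fin] at this
      omega
    calc N - m = (Finset.univ.filter (fun i : Fin N => ¬ (i : ℕ) < m)).card := hcard.symm
      _ ≤ _ := Finset.card_le_card hsub
  have hinj : Set.InjOn f (Finset.univ : Finset (Fin m → Fin n)) := by
    intro g₁ _ g₂ _ hgg
    funext b
    have hb : ((b : ℕ) : ℕ) < N := lt_of_lt_of_le b.2 hm.le
    have := congrFun hgg ⟨(b : ℕ), hb⟩
    simpa [hf, b.2] using this
  have := Finset.card_le_card_of_injOn f hmaps hinj
  simpa using this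

private lemma aux_upper (N m n : ℕ) (hm : m ≤ N) :
    (Finset.univ.filter (fun c : Fin N → Fin n =>
        N - m ≤ (Finset.univ.filter
          (fun i : Fin N => (c i : ℕ) = 0 ∨ (c i : ℕ) = n - 1)).card)).card
      ≤ 4 ^ N * n ^ m := by
  classical
  set B : Finset (Fin n) := Finset.univ.filter (fun x : Fin n => (x : ℕ) = 0 ∨ (x : ℕ) = n - 1)
    with hB
  have hBcard : B.card ≤ 2 := by
    have hsub : B ⊆ (Finset.univ.filter (fun x : Fin n => (x : ℕ) = 0)) ∪
        (Finset.univ.filter (fun x : Fin n => (x : ℕ) = n - 1)) := by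
      intro x hx
      rw [hB, Finset.mem_filter] at hx
      rcases hx.2 with h | h
      · exact Finset.mem_union_left _ (Finset.mem_filter.2 ⟨Finset.mem_univ _, h⟩)
      · exact Finset.mem_union_right _ (Finset.mem_filter.2 ⟨Finset.mem_univ _, h⟩)
    have h1 : (Finset.univ.filter (fun x : Fin n => (x : ℕ) = 0)).card ≤ 1 := by
      apply Finset.card_le_one.2
      intro a ha b hb
      rw [Finset.mem_filter] at ha hb
      exact Fin.ext (ha.2.trans hb.2.symm)
    have h2 : (Finset.univ.filter (fun x : Fin n => (x : ℕ) = n - 1)).card ≤ 1 := by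
      apply Finset.card_le_one.2
      intro a ha b hb
      rw [Finset.mem_filter] at ha hb
      exact Fin.ext (ha.2.trans hb.2.symm)
    calc B.card ≤ _ := Finset.card_le_card hsub
      _ ≤ _ + _ := Finset.card_union_le _ _
      _ ≤ 2 := by omega
  have hsub : (Finset.univ.filter (fun c : Fin N → Fin n =>
        N - m ≤ (Finset.univ.filter
          (fun i : Fin N => (c i : ℕ) = 0 ∨ (c i : ℕ) = n - 1)).card))
      ⊆ ((Finset.univ : Finset (Fin N)).powersetCard (N - m)).biUnion
          (fun S => Fintype.piFinset (fun i => if i ∈ S then B else Finset.univ)) := by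
    intro c hc
    rw [Finset.mem_filter] at hc
    obtain ⟨S, hS, hScard⟩ := Finset.exists_subset_card_eq hc.2
    refine Finset.mem_biUnion.2 ⟨S, ?_, ?_⟩
    · exact Finset.mem_powersetCard_univ.2 hScard
    · rw [Fintype.mem_piFinset]
      intro i
      by_cases hi : i ∈ S
      · rw [if_pos hi]
        have := hS hi
        rw [Finset.mem_filter] at this
        rw [hB, Finset.mem_filter]
        exact ⟨Finset.mem_univ _, this.2⟩
      · rw [if_neg hi]; exact Finset.mem_univ _
  have hpiece : ∀ S ∈ (Finset.univ : Finset (Fin N)).powersetCard (N - m),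
      (Fintype.piFinset (fun i => if i ∈ S then B else Finset.univ)).card ≤ 2 ^ N * n ^ m := by
    intro S hS
    have hScard : S.card = N - m := Finset.mem_powersetCard_univ.1 hS
    rw [Fintype.card_piFinset]
    have hle : ∀ i : Fin N, (if i ∈ S then B else Finset.univ).card ≤
        (if i ∈ S then 2 else n) := by
      intro i
      by_cases hi : i ∈ S <;> simp [hi, hBcard]
    calc (∏ i, (if i ∈ S then B else Finset.univ).card)
        ≤ ∏ i, (if i ∈ S then 2 else n) := Finset.prod_le_prod' (fun i _ => hle i)
      _ = (∏ i ∈ S, (if i ∈ S then 2 else n)) * ∏ i ∈ Sᶜ, (if i ∈ S then 2 else n) :=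
          (Finset.prod_mul_prod_compl S _).symm
      _ = 2 ^ S.card * n ^ Sᶜ.card := by
          rw [Finset.prod_congr rfl (fun i hi => if_pos hi),
            Finset.prod_congr rfl (fun i hi => if_neg (Finset.mem_compl.1 hi)),
            Finset.prod_const, Finset.prod_const]
      _ ≤ 2 ^ N * n ^ m := by
          rw [Finset.card_compl, Fintype.card_fin, hScard, Nat.sub_sub_self hm]
          exact Nat.mul_le_mul_right _ (Nat.pow_le_pow_right (by norm_num) (by omega))
  calc _ ≤ _ := Finset.card_le_card hsub
    _ ≤ ∑ S ∈ (Finset.univ : Finset (Fin N)).powersetCard (N - m),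
        (Fintype.piFinset (fun i => if i ∈ S then B else Finset.univ)).card :=
        Finset.card_biUnion_le
    _ ≤ ∑ _S ∈ (Finset.univ : Finset (Fin N)).powersetCard (N - m), 2 ^ N * n ^ m :=
        Finset.sum_le_sum hpiece
    _ = (N.choose (N - m)) * (2 ^ N * n ^ m) := by
        rw [Finset.sum_const, smul_eq_mul, Finset.card_powersetCard, Finset.card_univ,
          Fintype.card_fin]
    _ ≤ 2 ^ N * (2 ^ N * n ^ m) := by
        apply Nat.mul_le_mul_right
        calc N.choose (N - m) ≤ ∑ i ∈ Finset.range (N + 1), N.choose i :=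
            Finset.single_le_sum (fun _ _ => Nat.zero_le _)
              (Finset.mem_range.2 (by omega))
          _ = 2 ^ N := Nat.sum_range_choose N
    _ = 4 ^ N * n ^ m := by rw [show (4:ℕ)^N = 2^N*2^N from by rw [← Nat.mul_pow]]; ring

/-- For `m < s < m+1` with `1 ≤ m` and `s < N`: for all sufficiently large `n`, the number
`P_{N,m}(n)` of subcubes of side `1/n` of `[0,1]^N` meeting the `m`-skeleton of the boundary
satisfies `n^s - (n-2)^s < P_{N,m}(n) < n^s - 1`, and consequently there exists
`λ ∈ (1/n, 1-2/n)` with `P_{N,m}(n) n^{-s} + λ^s = 1`. -/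
theorem skeleton_count_squeeze (N m : ℕ) (s : ℝ) (hm : 1 ≤ m) (hms : (m : ℝ) < s)
    (hsm : s < (m : ℝ) + 1) (hsN : s < N) :
    ∃ n₀ : ℕ, ∀ n : ℕ, n₀ ≤ n →
      letI P : ℕ := (Finset.univ.filter (fun c : Fin N → Fin n =>
        N - m ≤ (Finset.univ.filter
          (fun i : Fin N => (c i : ℕ) = 0 ∨ (c i : ℕ) = n - 1)).card)).card
      (n : ℝ) ^ s - ((n : ℝ) - 2) ^ s < P ∧ (P : ℝ) < (n : ℝ) ^ s - 1 ∧
        ∃ lam : ℝ, 1 / (n : ℝ) < lam ∧ lam < 1 - 2 / (n : ℝ) ∧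
          (P : ℝ) * (n : ℝ) ^ (-s) + lam ^ s = 1 := by
  have hmN : m < N := by exact_mod_cast hms.trans hsN
  have hs0 : 0 < s := lt_of_le_of_lt (by positivity) hms
  -- eventual conditions
  have hev1 : ∀ᶠ x : ℝ in atTop, 2 * s < x ^ ((m : ℝ) + 1 - s) :=
    (tendsto_rpow_atTop (by linarith)).eventually_gt_atTop _
  have hev2 : ∀ᶠ x : ℝ in atTop, (4 : ℝ) ^ N + 1 < x ^ (s - (m : ℝ)) :=
    (tendsto_rpow_atTop (by linarith)).eventually_gt_atTop _
  have hev : ∀ᶠ n : ℕ in atTop, 2 * s < (n : ℝ) ^ ((m : ℝ) + 1 - s) ∧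
      (4 : ℝ) ^ N + 1 < (n : ℝ) ^ (s - (m : ℝ)) ∧ 3 ≤ n := by
    refine ((tendsto_natCast_atTop_atTop.eventually (hev1.and hev2)).and
      (eventually_ge_atTop 3)).mono ?_
    intro n hn
    exact ⟨hn.1.1, hn.1.2, hn.2⟩
  obtain ⟨n₀, hn₀⟩ := eventually_atTop.1 hev
  refine ⟨n₀, fun n hn => ?_⟩
  obtain ⟨hc1, hc2, hn3⟩ := hn₀ n hn
  set P : ℕ := (Finset.univ.filter (fun c : Fin N → Fin n =>
        N - m ≤ (Finset.univ.filter
          (fun i : Fin N => (c i : ℕ) = 0 ∨ (c i : ℕ) = n - 1)).card)).card with hP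
  have hnR : (3 : ℝ) ≤ (n : ℝ) := by exact_mod_cast hn3
  have hnpos : (0 : ℝ) < n := by linarith
  have hn2 : (0 : ℝ) < (n : ℝ) - 2 := by linarith
  -- bounds on P as naturals
  have hn1 : 1 ≤ n := le_trans (by norm_num) hn3
  have hPlow : n ^ m ≤ P := aux_lower N m n hmN hn1
  have hPhigh : P ≤ 4 ^ N * n ^ m := aux_upper N m n hmN.le
  have hPlowR : ((n : ℝ)) ^ (m : ℝ) ≤ (P : ℝ) := by
    rw [Real.rpow_natCast]
    exact_mod_cast hPlow
  have hPhighR : (P : ℝ) ≤ 4 ^ N * (n : ℝ) ^ (m : ℝ) := by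
    rw [Real.rpow_natCast]
    exact_mod_cast hPhigh
  -- lower squeeze: n^s - (n-2)^s < P
  have hlow : (n : ℝ) ^ s - ((n : ℝ) - 2) ^ s < P := by
    have hm1 : (1 : ℝ) ≤ (m : ℝ) := by exact_mod_cast hm
    have hdiv : 2 / (n : ℝ) ≤ 1 := by
      rw [div_le_one hnpos]; linarith
    have hbern : 1 + s * (-(2 / n)) ≤ (1 + (-(2 / n))) ^ s :=
      one_add_mul_self_le_rpow_one_add (by linarith) (by linarith)
    have hfact : ((n : ℝ) - 2) = (n : ℝ) * (1 + (-(2 / n))) := by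
      field_simp
      ring
    have hmul : ((n : ℝ) - 2) ^ s = (n : ℝ) ^ s * (1 + (-(2 / n))) ^ s := by
      rw [hfact, Real.mul_rpow hnpos.le (by linarith)]
    have key : (n : ℝ) ^ s - ((n : ℝ) - 2) ^ s ≤ (n : ℝ) ^ s * (s * (2 / n)) := by
      rw [hmul]
      have := mul_le_mul_of_nonneg_left hbern (Real.rpow_nonneg hnpos.le s)
      nlinarith [Real.rpow_nonneg hnpos.le s]
    have hlt : (n : ℝ) ^ s * (s * (2 / n)) < (n : ℝ) ^ (m : ℝ) := by
      have h1 : (n : ℝ) ^ s * (s * (2 / n)) = 2 * s * (n : ℝ) ^ (s - 1) := by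
        rw [Real.rpow_sub hnpos, Real.rpow_one]
        field_simp
      have h2 : (n : ℝ) ^ (m : ℝ) = (n : ℝ) ^ ((m : ℝ) + 1 - s) * (n : ℝ) ^ (s - 1) := by
        rw [← Real.rpow_add hnpos]; ring_nf
      rw [h1, h2]
      exact mul_lt_mul_of_pos_right hc1 (Real.rpow_pos_of_pos hnpos _)
    calc (n : ℝ) ^ s - ((n : ℝ) - 2) ^ s ≤ (n : ℝ) ^ s * (s * (2 / n)) := key
      _ < (n : ℝ) ^ (m : ℝ) := hlt
      _ ≤ P := hPlowR
  -- upper squeeze: P < n^s - 1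
  have hhigh : (P : ℝ) < (n : ℝ) ^ s - 1 := by
    have h1 : (1 : ℝ) ≤ (n : ℝ) ^ (m : ℝ) := Real.one_le_rpow (by linarith) (by positivity)
    have h2 : (n : ℝ) ^ s = (n : ℝ) ^ (s - (m : ℝ)) * (n : ℝ) ^ (m : ℝ) := by
      rw [← Real.rpow_add hnpos]; ring_nf
    have h3 : ((4 : ℝ) ^ N + 1) * (n : ℝ) ^ (m : ℝ) < (n : ℝ) ^ s := by
      rw [h2]
      exact mul_lt_mul_of_pos_right hc2 (Real.rpow_pos_of_pos hnpos _)
    nlinarith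
  refine ⟨hlow, hhigh, ?_⟩
  -- the intermediate value part
  set t : ℝ := 1 - (P : ℝ) * (n : ℝ) ^ (-s) with ht
  have hns : (n : ℝ) ^ (-s) = ((n : ℝ) ^ s)⁻¹ := Real.rpow_neg hnpos.le s
  have hnspos : (0 : ℝ) < (n : ℝ) ^ s := Real.rpow_pos_of_pos hnpos s
  have htlow : (1 / (n : ℝ)) ^ s < t := by
    have : (P : ℝ) * (n : ℝ) ^ (-s) < ((n : ℝ) ^ s - 1) * ((n : ℝ) ^ s)⁻¹ := by
      rw [hns]
      exact mul_lt_mul_of_pos_right hhigh (inv_pos.2 hnspos)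
    have h2 : ((n : ℝ) ^ s - 1) * ((n : ℝ) ^ s)⁻¹ = 1 - ((n : ℝ) ^ s)⁻¹ := by
      field_simp
    have h3 : (1 / (n : ℝ)) ^ s = ((n : ℝ) ^ s)⁻¹ := by
      rw [one_div, Real.inv_rpow hnpos.le]
    rw [ht, h3]
    linarith [this, h2 ▸ this]
  have hthigh : t < (1 - 2 / (n : ℝ)) ^ s := by
    have hfact2 : 1 - 2 / (n : ℝ) = ((n : ℝ) - 2) / n := by field_simp
    have h4 : (1 - 2 / (n : ℝ)) ^ s = ((n : ℝ) - 2) ^ s * ((n : ℝ) ^ s)⁻¹ := by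
      rw [hfact2, Real.div_rpow hn2.le hnpos.le, div_eq_mul_inv]
    have : ((n : ℝ) ^ s - ((n : ℝ) - 2) ^ s) * ((n : ℝ) ^ s)⁻¹ <
        (P : ℝ) * ((n : ℝ) ^ s)⁻¹ :=
      mul_lt_mul_of_pos_right hlow (inv_pos.2 hnspos)
    have h5 : ((n : ℝ) ^ s - ((n : ℝ) - 2) ^ s) * ((n : ℝ) ^ s)⁻¹ =
        1 - ((n : ℝ) - 2) ^ s * ((n : ℝ) ^ s)⁻¹ := by
      field_simp
    rw [ht, hns, h4]
    linarith [h5 ▸ this]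
  have htpos : 0 < t := lt_trans (Real.rpow_pos_of_pos (by positivity) s) htlow
  refine ⟨t ^ s⁻¹, ?_, ?_, ?_⟩
  · have := Real.rpow_lt_rpow (Real.rpow_nonneg (by positivity) s) htlow
      (inv_pos.2 hs0)
    rwa [Real.rpow_rpow_inv (by positivity) hs0.ne'] at this
  · have := Real.rpow_lt_rpow htpos.le hthigh (inv_pos.2 hs0)
    rwa [Real.rpow_rpow_inv (by rw [sub_nonneg, div_le_one hnpos]; linarith : (0:ℝ) ≤ 1 - 2 / (n:ℝ)) hs0.ne'] at this
  · rw [Real.rpow_inv_rpow htpos.le hs0.ne', ht]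
    ring
end

section
/- Let $\alpha \in (0, 1/16]$, $\delta > 0$, and let $v, v', v_1, \dots, v_n \in \mathbb{R}^N$ with $v_1 = v$, $v_n = v'$, $n \geq 2$, forming a $\delta$-separated set lying within distance $\alpha\delta$ of a line $\ell$ and ordered by projection onto $\ell$. If additionally $1 + 3\alpha^2 - \delta/|v - v'| \leq 1$, i.e. $3\alpha^2 \leq \delta/|v-v'|$, then for any $1 \leq l < m \leq n$ with $(l, m) \neq (1, n)$, one has $|v_l - v_m| \leq |v - v'|$. -/
open Metric

private theorem aux_key (α δ : ℝ) (hα0 : 0 < α) (hα : α ≤ 1 / 16) (hδ : 0 < δ) :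
    ∀ g T A : ℝ, 0 ≤ A → 0 < g → A + g ≤ T → (1 - 4 * α ^ 2) * δ ^ 2 ≤ g ^ 2 →
      A ^ 2 + 4 * α ^ 2 * δ ^ 2 ≤ T ^ 2 := by
  intro g T A hA hg hT hg2
  have hα2 : α ^ 2 ≤ 1 / 256 := by nlinarith
  have hTA : (A + g) * (A + g) ≤ T * T :=
    mul_self_le_mul_self (by linarith) hT
  nlinarith [mul_nonneg hA hg.le, mul_pos hδ hδ]

set_option maxHeartbeats 1000000 in
/-- Lemma 4.8: for a δ-separated, nearly collinear, ordered set of points with flatness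
`3α² ≤ δ/|v - v'|`, the distance between any two intermediate points is at most the
distance between the extreme points. -/
theorem intermediate_dist_le_span {N n : ℕ} (hn : 2 ≤ n) (α δ : ℝ)
    (hα0 : 0 < α) (hα : α ≤ 1 / 16) (hδ : 0 < δ)
    (v : ℕ → EuclideanSpace ℝ (Fin N)) (p u : EuclideanSpace ℝ (Fin N)) (hu : ‖u‖ = 1)
    (hsep : ∀ i < n, ∀ j < n, i ≠ j → δ ≤ dist (v i) (v j))
    (hclose : ∀ i < n, Metric.infDist (v i) {y | ∃ t : ℝ, y = p + t • u} ≤ α * δ)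
    (hmono : ∀ i j : ℕ, i < j → j < n →
      (inner ℝ (v i - p) u : ℝ) < (inner ℝ (v j - p) u : ℝ))
    (hflat : 3 * α ^ 2 ≤ δ / dist (v 0) (v (n - 1))) :
    ∀ l m : ℕ, l < m → m < n → (l, m) ≠ (0, n - 1) →
      dist (v l) (v m) ≤ dist (v 0) (v (n - 1)) := by
  intro l m hlm hmn hne
  set t : ℕ → ℝ := fun i => inner ℝ (v i - p) u with ht
  set e : ℕ → EuclideanSpace ℝ (Fin N) := fun i => (v i - p) - t i • u with he
  have huu : (inner ℝ u u : ℝ) = 1 := by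
    rw [real_inner_self_eq_norm_sq, hu]; norm_num
  have heu : ∀ i, (inner ℝ (e i) u : ℝ) = 0 := by
    intro i
    simp only [he, ht, inner_sub_left, real_inner_smul_left, huu]
    ring
  have heu' : ∀ i, (inner ℝ u (e i) : ℝ) = 0 := by
    intro i; rw [real_inner_comm]; exact heu i
  have hne' : Set.Nonempty {y : EuclideanSpace ℝ (Fin N) | ∃ s : ℝ, y = p + s • u} :=
    ⟨p + (0 : ℝ) • u, ⟨0, rfl⟩⟩
  have henorm : ∀ i, i < n → ‖e i‖ ≤ α * δ := by
    intro i hi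
    refine le_trans ?_ (hclose i hi)
    by_contra h
    push_neg at h
    obtain ⟨y, hy, hlt⟩ := (infDist_lt_iff hne').1 h
    obtain ⟨s, rfl⟩ := hy
    have hdecomp : v i - (p + s • u) = e i + (t i - s) • u := by
      simp only [he]; module
    have hd : dist (v i) (p + s • u) = ‖e i + (t i - s) • u‖ := by
      rw [dist_eq_norm, hdecomp]
    have hsq : ‖e i + (t i - s) • u‖ ^ 2 = ‖e i‖ ^ 2 + (t i - s) ^ 2 := by
      rw [norm_add_sq_real, real_inner_smul_right, heu i, norm_smul, hu]
      simp [sq_abs]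
    rw [hd] at hlt
    nlinarith [norm_nonneg (e i), norm_nonneg (e i + (t i - s) • u), sq_nonneg (t i - s)]
  have hdist2 : ∀ i j, dist (v i) (v j) ^ 2 = (t i - t j) ^ 2 + ‖e i - e j‖ ^ 2 := by
    intro i j
    have hdecomp : v i - v j = (t i - t j) • u + (e i - e j) := by
      simp only [he]; module
    rw [dist_eq_norm, hdecomp, norm_add_sq_real]
    have hz : (inner ℝ ((t i - t j) • u) (e i - e j) : ℝ) = 0 := by
      rw [real_inner_smul_left, inner_sub_right, heu' i, heu' j]
      ring
    rw [hz, norm_smul, hu]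
    simp [sq_abs]
  have hgap : ∀ i, i + 1 < n → (1 - 4 * α ^ 2) * δ ^ 2 ≤ (t (i + 1) - t i) ^ 2 := by
    intro i hi
    have h1 : δ ≤ dist (v i) (v (i + 1)) := hsep i (by omega) (i + 1) hi (by omega)
    have h2 := hdist2 i (i + 1)
    have he1 := henorm i (by omega)
    have he2 := henorm (i + 1) hi
    have hle : ‖e i - e (i + 1)‖ ≤ 2 * (α * δ) := by
      calc ‖e i - e (i + 1)‖ ≤ ‖e i‖ + ‖e (i + 1)‖ := norm_sub_le _ _
        _ ≤ 2 * (α * δ) := by linarith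
    have hle2 : ‖e i - e (i + 1)‖ ^ 2 ≤ 4 * α ^ 2 * δ ^ 2 := by
      nlinarith [norm_nonneg (e i - e (i + 1))]
    have hd2 : δ ^ 2 ≤ dist (v i) (v (i + 1)) ^ 2 := by
      nlinarith [dist_nonneg (x := v i) (y := v (i + 1))]
    nlinarith
  have tmono : ∀ i j, i ≤ j → j < n → t i ≤ t j := by
    intro i j hij hj
    rcases eq_or_lt_of_le hij with rfl | h
    · exact le_refl _
    · exact (hmono i j h hj).le
  have hn1 : n - 1 < n := by omega
  have key := aux_key α δ hα0 hα hδ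
  have hA : 0 ≤ t m - t l := sub_nonneg.2 (tmono l m hlm.le hmn)
  obtain ⟨i, hi, hTg⟩ : ∃ i, i + 1 < n ∧ t m - t l + (t (i + 1) - t i) ≤ t (n - 1) - t 0 := by
    rcases Nat.eq_zero_or_pos l with rfl | hl
    · have hmne : m ≠ n - 1 := by
        intro hmeq; exact hne (by rw [hmeq])
      have hm : m + 1 < n := by omega
      refine ⟨m, hm, ?_⟩
      have h1 : t (m + 1) ≤ t (n - 1) := tmono (m + 1) (n - 1) (by omega) hn1
      linarith
    · refine ⟨l - 1, by omega, ?_⟩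
      have hl1 : l - 1 + 1 = l := by omega
      have h1 : t m ≤ t (n - 1) := tmono m (n - 1) (by omega) hn1
      have h2 : t 0 ≤ t (l - 1) := tmono 0 (l - 1) (by omega) (by omega)
      rw [hl1]; linarith
  have hg : 0 < t (i + 1) - t i := sub_pos.2 (hmono i (i + 1) (by omega) hi)
  have hg2 := hgap i hi
  have hkey := key _ _ _ hA hg hTg hg2
  have hd1 : dist (v l) (v m) ^ 2 ≤ (t m - t l) ^ 2 + 4 * α ^ 2 * δ ^ 2 := by
    rw [hdist2 l m]
    have he1 := henorm l (by omega)
    have he2 := henorm m (by omega)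
    have hle : ‖e l - e m‖ ≤ 2 * (α * δ) := by
      calc ‖e l - e m‖ ≤ ‖e l‖ + ‖e m‖ := norm_sub_le _ _
        _ ≤ 2 * (α * δ) := by linarith
    have hle2 : ‖e l - e m‖ ^ 2 ≤ 4 * α ^ 2 * δ ^ 2 := by
      nlinarith [norm_nonneg (e l - e m)]
    have hsym : (t l - t m) ^ 2 = (t m - t l) ^ 2 := by ring
    linarith [hsym ▸ le_refl ((t l - t m) ^ 2)]
  have hd2 : (t (n - 1) - t 0) ^ 2 ≤ dist (v 0) (v (n - 1)) ^ 2 := by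
    rw [hdist2 0 (n - 1)]
    have hsym : (t 0 - t (n - 1)) ^ 2 = (t (n - 1) - t 0) ^ 2 := by ring
    linarith [sq_nonneg ‖e 0 - e (n - 1)‖]
  have hfin : dist (v l) (v m) ^ 2 ≤ dist (v 0) (v (n - 1)) ^ 2 := by linarith
  have := Real.sqrt_le_sqrt hfin
  rwa [Real.sqrt_sq dist_nonneg, Real.sqrt_sq dist_nonneg] at this
end
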